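/- arXiv:2005.13887 — 8 statements merged into one kernel-verified Lean document; each statement's English description precedes it below -/
import Mathlib

section
/- The partition S = {{g} : g ∈ P} ∪ {X_i g : g ∈ P, i ∈ {1,2,3}} of G is a Schur partition: it contains {1_G}, is closed under taking inverses of its classes, and the product of characteristic sums of any two classes lies in the Z-span of characteristic sums of classes. -/
open scoped Pointwise

/-- The characteristic sum (simple quantity) `∑_{x ∈ X} x` of a subset `X` of a finite
group `G`, viewed in the integral group ring `ℤG`. -/
noncomputable def charSum {G : Type*} [Group G] [Fintype G] (X : Set G) :
    MonoidAlgebra ℤ G :=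
  ∑ x ∈ (Set.toFinite X).toFinset, MonoidAlgebra.single x 1

/-- The partition `S = {{g} : g ∈ P} ∪ {X_i g : g ∈ P, i ∈ {1,2,3}}`,
where `X i = Pᵢ aᵢ`. -/
def schurClasses {G : Type*} [CommGroup G] (P : Subgroup G) (a : Fin 3 → G)
    (Psub : Fin 3 → Subgroup G) : Set (Set G) :=
  {T | (∃ g ∈ P, T = {g}) ∨ ∃ i : Fin 3, ∃ g ∈ P, T = (Psub i : Set G) * {a i} * {g}}

section Aux

set_option linter.unusedSectionVars false

variable {G : Type*} [CommGroup G] [Fintype G]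

lemma charSum_singleton (g : G) : charSum {g} = MonoidAlgebra.single g 1 := by
  unfold charSum
  rw [show (Set.toFinite ({g} : Set G)).toFinset = {g} by ext; simp]
  simp

lemma charSum_mul_single (X : Set G) (g : G) :
    charSum (X * {g}) = charSum X * MonoidAlgebra.single g 1 := by
  unfold charSum
  rw [Finset.sum_mul]
  refine Finset.sum_nbij' (fun x => x * g⁻¹) (fun x => x * g) ?_ ?_ ?_ ?_ ?_
  · intro x hx
    simp only [Set.Finite.mem_toFinset, Set.mul_singleton, Set.mem_image] at hx ⊢
    obtain ⟨y, hy, rfl⟩ := hx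
    simpa using hy
  · intro x hx
    simp only [Set.Finite.mem_toFinset, Set.mul_singleton, Set.mem_image] at hx ⊢
    exact ⟨x, hx, rfl⟩
  · intro x _; simp
  · intro x _; simp
  · intro x _
    rw [MonoidAlgebra.single_mul_single]
    simp

lemma subgroup_inv_set (K : Subgroup G) : (K : Set G)⁻¹ = K := by
  ext x; simp [Set.mem_inv, inv_mem_iff]

lemma charSum_class (K : Subgroup G) (b g : G) :
    charSum ((K : Set G) * {b} * {g})
      = charSum (K : Set G) * MonoidAlgebra.single b 1 * MonoidAlgebra.single g 1 := by
  rw [charSum_mul_single, charSum_mul_single]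

lemma charSum_subgroup_mul_subgroup {H K : Subgroup G} (h : H ⊓ K = ⊥) :
    charSum ((H : Set G) * (K : Set G)) = charSum (H : Set G) * charSum (K : Set G) := by
  unfold charSum
  rw [Finset.sum_mul_sum]
  simp only [MonoidAlgebra.single_mul_single, one_mul]
  rw [← Finset.sum_product']
  refine (Finset.sum_nbij (fun q => q.1 * q.2) ?_ ?_ ?_ ?_).symm
  · rintro ⟨x, y⟩ hq
    simp only [Finset.mem_product, Set.Finite.mem_toFinset, SetLike.mem_coe] at hq
    simp only [Set.Finite.mem_toFinset, Set.mem_mul]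
    exact ⟨x, hq.1, y, hq.2, rfl⟩
  · rintro ⟨x₁, y₁⟩ h₁ ⟨x₂, y₂⟩ h₂ heq
    simp only [Finset.coe_product, Set.mem_prod, Finset.mem_coe, Set.Finite.mem_toFinset,
      SetLike.mem_coe] at h₁ h₂
    have h0 : x₁ * y₁ = x₂ * y₂ := heq
    have hx : x₂⁻¹ * x₁ = y₂ * y₁⁻¹ := by
      calc x₂⁻¹ * x₁ = x₂⁻¹ * (x₁ * y₁) * y₁⁻¹ := by group
        _ = x₂⁻¹ * (x₂ * y₂) * y₁⁻¹ := by rw [h0]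
        _ = y₂ * y₁⁻¹ := by group
    have hmem : x₂⁻¹ * x₁ ∈ H ⊓ K := by
      rw [Subgroup.mem_inf]
      refine ⟨mul_mem (inv_mem h₂.1) h₁.1, ?_⟩
      rw [hx]; exact mul_mem h₂.2 (inv_mem h₁.2)
    rw [h, Subgroup.mem_bot] at hmem
    have hxeq : x₁ = x₂ := (inv_mul_eq_one.mp hmem).symm
    have hyeq : y₁ = y₂ := (mul_inv_eq_one.mp (hx ▸ hmem)).symm
    exact Prod.ext hxeq hyeq
  · intro z hz
    simp only [Finset.mem_coe, Set.Finite.mem_toFinset, Set.mem_mul] at hz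
    obtain ⟨x, hx, y, hy, rfl⟩ := hz
    refine ⟨(x, y), ?_, rfl⟩
    simp only [Finset.coe_product, Set.mem_prod, Finset.mem_coe, Set.Finite.mem_toFinset]
    exact ⟨hx, hy⟩
  · intro q _; rfl

lemma charSum_card (H : Subgroup G) :
    (Set.toFinite (H : Set G)).toFinset.card = Nat.card H := by
  rw [← Set.ncard_eq_toFinset_card (H : Set G) (Set.toFinite _), ← Nat.card_coe_set_eq]
  rfl

lemma charSum_subgroup_sq (H : Subgroup G) :
    charSum (H : Set G) * charSum (H : Set G)
      = (Nat.card H : ℤ) • charSum (H : Set G) := by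
  nth_rewrite 1 [show charSum (H : Set G) =
    ∑ x ∈ (Set.toFinite (H : Set G)).toFinset, MonoidAlgebra.single x 1 from rfl]
  rw [Finset.sum_mul]
  have h : ∀ x ∈ (Set.toFinite (H : Set G)).toFinset,
      MonoidAlgebra.single x (1 : ℤ) * charSum (H : Set G) = charSum (H : Set G) := by
    intro x hx
    rw [Set.Finite.mem_toFinset, SetLike.mem_coe] at hx
    rw [mul_comm, ← charSum_mul_single, Subgroup.subgroup_mul_singleton hx]
  rw [Finset.sum_congr rfl h, Finset.sum_const, charSum_card, natCast_zsmul]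

end Aux

theorem stmt0 {G : Type*} [CommGroup G] [Fintype G] (p : ℕ) (hp : p.Prime) (hp5 : 5 ≤ p)
    (A P : Subgroup G) (hAP_inf : A ⊓ P = ⊥) (hAP_sup : A ⊔ P = ⊤)
    (hA_card : Nat.card A = 4) (hA_exp : ∀ x ∈ A, x ^ 2 = 1)
    (hP_card : Nat.card P = p ^ 2) (hP_exp : ∀ x ∈ P, x ^ p = 1)
    (a : Fin 3 → G) (ha_mem : ∀ i, a i ∈ A) (ha_ne : ∀ i, a i ≠ 1)
    (ha_inj : Function.Injective a)
    (Psub : Fin 3 → Subgroup G) (hPsub_le : ∀ i, Psub i ≤ P)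
    (hPsub_card : ∀ i, Nat.card (Psub i) = p) (hPsub_inj : Function.Injective Psub) :
    ({1} : Set G) ∈ schurClasses P a Psub ∧
    (∀ T ∈ schurClasses P a Psub, T⁻¹ ∈ schurClasses P a Psub) ∧
    (∀ T ∈ schurClasses P a Psub, ∀ U ∈ schurClasses P a Psub,
      charSum T * charSum U ∈
        Submodule.span ℤ (charSum '' (schurClasses P a Psub))) := by
  classical
  -- basic facts about the a i
  have hA2 : ∀ i, a i * a i = 1 := by
    intro i
    have := hA_exp (a i) (ha_mem i)
    rwa [sq] at this
  have hAinv : ∀ i, (a i)⁻¹ = a i := fun i => inv_eq_of_mul_eq_one_right (hA2 i)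
  -- class membership helpers
  have hsingle : ∀ g ∈ P, ({g} : Set G) ∈ schurClasses P a Psub :=
    fun g hg => Or.inl ⟨g, hg, rfl⟩
  have hclass : ∀ (i : Fin 3), ∀ g ∈ P,
      ((Psub i : Set G) * {a i} * {g}) ∈ schurClasses P a Psub :=
    fun i g hg => Or.inr ⟨i, g, hg, rfl⟩
  -- surjectivity of a onto nontrivial elements of A
  have hsurj : ∀ x ∈ A, x ≠ 1 → ∃ k, a k = x := by
    intro x hx hx1
    set s : Finset G := {1, a 0, a 1, a 2} with hs
    have h01 : a 0 ≠ a 1 := fun h => absurd (ha_inj h) (by decide)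
    have h02 : a 0 ≠ a 2 := fun h => absurd (ha_inj h) (by decide)
    have h12 : a 1 ≠ a 2 := fun h => absurd (ha_inj h) (by decide)
    have hscard : s.card = 4 := by
      rw [hs]
      rw [Finset.card_insert_of_notMem (by simp [(ha_ne 0).symm, (ha_ne 1).symm, (ha_ne 2).symm]),
        Finset.card_insert_of_notMem (by simp [h01, h02]),
        Finset.card_insert_of_notMem (by simp [h12]), Finset.card_singleton]
    have hsub : s ⊆ (Set.toFinite (A : Set G)).toFinset := by
      intro y hy
      rw [Set.Finite.mem_toFinset, SetLike.mem_coe]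
      rw [hs] at hy
      simp only [Finset.mem_insert, Finset.mem_singleton] at hy
      rcases hy with rfl | rfl | rfl | rfl
      · exact one_mem A
      · exact ha_mem 0
      · exact ha_mem 1
      · exact ha_mem 2
    have hAcard : (Set.toFinite (A : Set G)).toFinset.card = 4 := by
      rw [charSum_card]; exact hA_card
    have heq : s = (Set.toFinite (A : Set G)).toFinset :=
      Finset.eq_of_subset_of_card_le hsub (by rw [hAcard, hscard])
    have hxmem : x ∈ s := by
      rw [heq, Set.Finite.mem_toFinset]; exact hx
    rw [hs] at hxmem
    simp only [Finset.mem_insert, Finset.mem_singleton] at hxmem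
    rcases hxmem with h | h | h | h
    · exact absurd h hx1
    · exact ⟨0, h.symm⟩
    · exact ⟨1, h.symm⟩
    · exact ⟨2, h.symm⟩
  -- trivial pairwise intersections
  have hinf : ∀ i j, i ≠ j → Psub i ⊓ Psub j = ⊥ := by
    intro i j hij
    have hd : Nat.card (Psub i ⊓ Psub j : Subgroup G) ∣ p := by
      rw [← hPsub_card i]; exact Subgroup.card_dvd_of_le inf_le_left
    rcases hp.eq_one_or_self_of_dvd _ hd with h1 | hpp
    · exact Subgroup.card_eq_one.mp h1
    · exfalso
      have hei : Psub i ⊓ Psub j = Psub i :=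
        Subgroup.eq_of_le_of_card_ge (inf_le_left : Psub i ⊓ Psub j ≤ Psub i)
          ((hPsub_card i).trans hpp.symm).le
      have hej : Psub i ⊓ Psub j = Psub j :=
        Subgroup.eq_of_le_of_card_ge (inf_le_right : Psub i ⊓ Psub j ≤ Psub j)
          ((hPsub_card j).trans hpp.symm).le
      exact hij (hPsub_inj (hei.symm.trans hej))
  -- products of distinct Psub's give P
  have hsup : ∀ i j, i ≠ j → (Psub i : Set G) * (Psub j : Set G) = (P : Set G) := by
    intro i j hij
    suffices hgoal : Psub i ⊔ Psub j = P by rw [← Subgroup.mul_normal, hgoal]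
    have hle : Psub i ⊔ Psub j ≤ P := sup_le (hPsub_le i) (hPsub_le j)
    have hd : Nat.card (Psub i ⊔ Psub j : Subgroup G) ∣ p ^ 2 := by
      rw [← hP_card]; exact Subgroup.card_dvd_of_le hle
    obtain ⟨k, hk2, hcard⟩ := (Nat.dvd_prime_pow hp).mp hd
    have hpd : p ∣ Nat.card (Psub i ⊔ Psub j : Subgroup G) := by
      rw [← hPsub_card i]; exact Subgroup.card_dvd_of_le le_sup_left
    interval_cases k
    · exfalso
      rw [hcard, pow_zero] at hpd
      exact hp.one_lt.ne' (Nat.eq_one_of_dvd_one hpd)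
    · exfalso
      rw [pow_one] at hcard
      have hei : Psub i = Psub i ⊔ Psub j :=
        Subgroup.eq_of_le_of_card_ge le_sup_left (hcard.trans (hPsub_card i).symm).le
      have hej : Psub j = Psub i ⊔ Psub j :=
        Subgroup.eq_of_le_of_card_ge le_sup_right (hcard.trans (hPsub_card j).symm).le
      exact hij (hPsub_inj (hei.trans hej.symm))
    · exact Subgroup.eq_of_le_of_card_ge hle (hP_card.trans hcard.symm).le
  refine ⟨hsingle 1 (one_mem P), ?_, ?_⟩
  · -- inverse closure
    rintro T (⟨g, hg, rfl⟩ | ⟨i, g, hg, rfl⟩)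
    · rw [Set.inv_singleton]
      exact hsingle g⁻¹ (inv_mem hg)
    · have : ((Psub i : Set G) * {a i} * {g})⁻¹ = (Psub i : Set G) * {a i} * {g⁻¹} := by
        rw [mul_inv_rev, mul_inv_rev, subgroup_inv_set, Set.inv_singleton, Set.inv_singleton,
          hAinv i, mul_comm ({(a i)} : Set G) (Psub i : Set G), mul_comm]
      rw [this]
      exact hclass i g⁻¹ (inv_mem hg)
  · -- products
    set M := Submodule.span ℤ (charSum '' (schurClasses P a Psub)) with hM
    have hmemM : ∀ T ∈ schurClasses P a Psub, charSum T ∈ M :=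
      fun T hT => Submodule.subset_span ⟨T, hT, rfl⟩
    -- key: charSum of any subset of P is in M
    have key : ∀ X : Set G, X ⊆ (P : Set G) → charSum X ∈ M := by
      intro X hX
      unfold charSum
      refine Submodule.sum_mem _ ?_
      intro y hy
      rw [Set.Finite.mem_toFinset] at hy
      rw [← charSum_singleton]
      exact hmemM _ (hsingle y (hX hy))
    -- key2: charSum(Psub k) * single (a k) * charSum X ∈ M for X ⊆ P
    have key2 : ∀ (k : Fin 3) (X : Set G), X ⊆ (P : Set G) →
        charSum (Psub k : Set G) * MonoidAlgebra.single (a k) 1 * charSum X ∈ M := by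
      intro k X hX
      rw [show charSum X =
        ∑ x ∈ (Set.toFinite X).toFinset, MonoidAlgebra.single x 1 from rfl, Finset.mul_sum]
      refine Submodule.sum_mem _ ?_
      intro y hy
      rw [Set.Finite.mem_toFinset] at hy
      rw [← charSum_class]
      exact hmemM _ (hclass k y (hX hy))
    rintro T (⟨g, hg, rfl⟩ | ⟨i, g, hg, rfl⟩) U (⟨g', hg', rfl⟩ | ⟨j, g', hg', rfl⟩)
    · -- singleton * singleton
      rw [charSum_singleton, charSum_singleton, MonoidAlgebra.single_mul_single, one_mul,
        ← charSum_singleton]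
      exact hmemM _ (hsingle _ (mul_mem hg hg'))
    · -- singleton * class
      rw [mul_comm, charSum_singleton, ← charSum_mul_single, mul_assoc,
        Set.singleton_mul_singleton]
      exact hmemM _ (hclass j _ (mul_mem hg' hg))
    · -- class * singleton
      rw [charSum_singleton, ← charSum_mul_single, mul_assoc, Set.singleton_mul_singleton]
      exact hmemM _ (hclass i _ (mul_mem hg hg'))
    · -- class * class
      rw [charSum_class, charSum_class]
      by_cases hij : i = j
      · subst hij
        have e1 : charSum (Psub i : Set G) * MonoidAlgebra.single (a i) 1 *
              MonoidAlgebra.single g 1 *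
              (charSum (Psub i : Set G) * MonoidAlgebra.single (a i) 1 *
              MonoidAlgebra.single g' 1)
            = charSum (Psub i : Set G) * charSum (Psub i : Set G) *
              (MonoidAlgebra.single (a i) 1 * MonoidAlgebra.single (a i) 1 *
              (MonoidAlgebra.single g 1 * MonoidAlgebra.single g' 1)) := by ring
        rw [e1, MonoidAlgebra.single_mul_single, MonoidAlgebra.single_mul_single, hA2 i,
          one_mul, ← MonoidAlgebra.one_def, one_mul, charSum_subgroup_sq, smul_mul_assoc,
          ← charSum_mul_single]
        refine Submodule.smul_mem _ _ (key _ ?_)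
        intro y hy
        obtain ⟨h, hh, z, hz, rfl⟩ := hy
        rw [Set.mem_singleton_iff] at hz
        subst hz
        exact mul_mem (hPsub_le i hh) (mul_mem hg hg')
      · -- i ≠ j : a i * a j = a k for some k ≠ i
        have hne1 : a i * a j ≠ 1 := by
          intro h
          have h2 : a i = (a j)⁻¹ := eq_inv_of_mul_eq_one_left h
          rw [hAinv j] at h2
          exact hij (ha_inj h2)
        obtain ⟨k, hk⟩ := hsurj (a i * a j) (mul_mem (ha_mem i) (ha_mem j)) hne1
        have hki : k ≠ i := by
          intro h; subst h
          apply ha_ne j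
          have h2 : a k * 1 = a k * a j := by rw [mul_one]; exact hk
          exact (mul_left_cancel h2).symm
        have e1 : charSum (Psub i : Set G) * MonoidAlgebra.single (a i) 1 *
              MonoidAlgebra.single g 1 *
              (charSum (Psub j : Set G) * MonoidAlgebra.single (a j) 1 *
              MonoidAlgebra.single g' 1)
            = charSum (Psub i : Set G) * charSum (Psub j : Set G) *
              ((MonoidAlgebra.single (a i) 1 * MonoidAlgebra.single (a j) 1) *
              (MonoidAlgebra.single g 1 * MonoidAlgebra.single g' 1)) := by ring
        have e2 : charSum (Psub i : Set G) * charSum (Psub j : Set G)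
            = charSum (Psub k : Set G) * charSum (Psub i : Set G) := by
          rw [← charSum_subgroup_mul_subgroup (hinf i j hij),
            ← charSum_subgroup_mul_subgroup (hinf k i hki), hsup i j hij, hsup k i hki]
        rw [e1, e2, MonoidAlgebra.single_mul_single, MonoidAlgebra.single_mul_single,
          one_mul, ← hk]
        have e3 : charSum (Psub k : Set G) * charSum (Psub i : Set G) *
              (MonoidAlgebra.single (a k) 1 * MonoidAlgebra.single (g * g') 1)
            = charSum (Psub k : Set G) * MonoidAlgebra.single (a k) 1 *
              (charSum (Psub i : Set G) * MonoidAlgebra.single (g * g') 1) := by ring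
        rw [e3, show charSum ((Psub i : Set G)) * MonoidAlgebra.single (g * g') 1
          = charSum ((Psub i : Set G) * {g * g'}) from (charSum_mul_single _ _).symm]
        refine key2 k _ ?_
        intro y hy
        obtain ⟨h, hh, z, hz, rfl⟩ := hy
        rw [Set.mem_singleton_iff] at hz
        subst hz
        exact mul_mem (hPsub_le i hh) (mul_mem hg hg')
end

section
/- For each i ∈ {1,2,3}, the set X_i = P_i a_i satisfies X_i = X_i^{-1}, |X_i| = p, the two-sided stabilizer rad(X_i) = {g ∈ G : X_i g = g X_i = X_i} equals P_i (hence has order p and is cyclic), and rad(X_i) ∩ rad(X_j) = {1} whenever i ≠ j. -/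
open scoped Pointwise

/-- The two-sided radical `rad(X) = {g ∈ G : Xg = gX = X}` of a subset of a group. -/
def radSet {G : Type*} [Group G] (X : Set G) : Set G :=
  {g : G | X * {g} = X ∧ {g} * X = X}

lemma coe_mul_singleton_self {G : Type*} [Group G] (H : Subgroup G) {g : G} (hg : g ∈ H) :
    (H : Set G) * {g} = H := by
  ext x
  simp only [Set.mem_mul, Set.mem_singleton_iff, SetLike.mem_coe]
  constructor
  · rintro ⟨h, hh, y, rfl, rfl⟩
    exact H.mul_mem hh hg
  · intro hx
    exact ⟨x * g⁻¹, H.mul_mem hx (H.inv_mem hg), g, rfl, by group⟩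

lemma radSet_coset {G : Type*} [CommGroup G] (H : Subgroup G) (a : G) :
    radSet ((H : Set G) * {a}) = H := by
  ext g
  simp only [radSet, Set.mem_setOf_eq, SetLike.mem_coe]
  constructor
  · rintro ⟨h1, -⟩
    have hmem : a * g ∈ (H : Set G) * {a} := by
      rw [← h1]
      exact ⟨1 * a, ⟨1, H.one_mem, a, rfl, rfl⟩, g, rfl, by rw [one_mul]⟩
    obtain ⟨h, hh, y, hy, heq⟩ := hmem
    simp only [Set.mem_singleton_iff] at hy
    subst hy
    have hgh : g = h := by
      have h2 : y * g = y * h := by rw [← heq, mul_comm]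
      exact mul_left_cancel h2
    rwa [hgh]
  · intro hg
    have key : (H : Set G) * {a} * {g} = (H : Set G) * {a} := by
      rw [mul_right_comm, coe_mul_singleton_self H hg]
    exact ⟨key, by rw [mul_comm]; exact key⟩

theorem stmt1 {G : Type*} [CommGroup G] [Fintype G] (p : ℕ) (hp : p.Prime) (hp5 : 5 ≤ p)
    (A P : Subgroup G) (hAP_inf : A ⊓ P = ⊥) (hAP_sup : A ⊔ P = ⊤)
    (hA_card : Nat.card A = 4) (hA_exp : ∀ x ∈ A, x ^ 2 = 1)
    (hP_card : Nat.card P = p ^ 2) (hP_exp : ∀ x ∈ P, x ^ p = 1)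
    (a : Fin 3 → G) (ha_mem : ∀ i, a i ∈ A) (ha_ne : ∀ i, a i ≠ 1)
    (ha_inj : Function.Injective a)
    (Psub : Fin 3 → Subgroup G) (hPsub_le : ∀ i, Psub i ≤ P)
    (hPsub_card : ∀ i, Nat.card (Psub i) = p) (hPsub_inj : Function.Injective Psub)
    (X : Fin 3 → Set G) (hX : ∀ i, X i = (Psub i : Set G) * {a i}) :
    ∀ i : Fin 3,
      (X i)⁻¹ = X i ∧
      Nat.card (X i) = p ∧
      radSet (X i) = (Psub i : Set G) ∧
      Nat.card (radSet (X i)) = p ∧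
      (∃ x : G, x ∈ radSet (X i) ∧ radSet (X i) = {y : G | ∃ n : ℤ, y = x ^ n}) ∧
      (∀ j : Fin 3, j ≠ i → radSet (X i) ∩ radSet (X j) = {1}) := by
  haveI : Fact p.Prime := ⟨hp⟩
  intro i
  have haa : (a i)⁻¹ = a i := by
    have h2 : a i * a i = 1 := by
      have := hA_exp _ (ha_mem i); rwa [pow_two] at this
    exact inv_eq_of_mul_eq_one_left h2
  refine ⟨?_, ?_, ?_, ?_, ?_, ?_⟩
  · rw [hX i, mul_inv_rev, Set.inv_singleton, haa, inv_coe_set, mul_comm]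
  · rw [hX i, Set.mul_singleton,
      Nat.card_image_of_injective (mul_left_injective (a i)), SetLike.coe_sort_coe]
    exact hPsub_card i
  · rw [hX i, radSet_coset]
  · rw [hX i, radSet_coset, SetLike.coe_sort_coe]
    exact hPsub_card i
  · haveI : IsCyclic (Psub i) := isCyclic_of_prime_card (hPsub_card i)
    obtain ⟨g, hg⟩ := IsCyclic.exists_generator (α := Psub i)
    refine ⟨(g : G), ?_, ?_⟩
    · rw [hX i, radSet_coset]; exact g.2
    · rw [hX i, radSet_coset]
      ext y
      simp only [SetLike.mem_coe, Set.mem_setOf_eq]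
      constructor
      · intro hy
        obtain ⟨n, hn⟩ := Subgroup.mem_zpowers_iff.mp (hg ⟨y, hy⟩)
        have := congrArg (Subtype.val) hn
        simp only [SubgroupClass.coe_zpow] at this
        exact ⟨n, this.symm⟩
      · rintro ⟨n, rfl⟩
        exact Subgroup.zpow_mem _ g.2 n
  · intro j hji
    rw [hX i, hX j, radSet_coset, radSet_coset]
    have hne : Psub i ≠ Psub j := fun h => hji (hPsub_inj h).symm
    have hbot : Psub i ⊓ Psub j = ⊥ := by
      have hdvd : Nat.card (↥(Psub i ⊓ Psub j)) ∣ p := by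
        rw [← hPsub_card i]; exact Subgroup.card_dvd_of_le inf_le_left
      rcases hp.eq_one_or_self_of_dvd _ hdvd with h1 | hpp
      · exact Subgroup.card_eq_one.mp h1
      · exfalso
        apply hne
        have e1 : Psub i ⊓ Psub j = Psub i :=
          Subgroup.eq_of_le_of_card_ge inf_le_left (by rw [hpp, hPsub_card i])
        have e2 : Psub i ⊓ Psub j = Psub j :=
          Subgroup.eq_of_le_of_card_ge inf_le_right (by rw [hpp, hPsub_card j])
        rw [← e1, e2]
    rw [← Subgroup.coe_inf, hbot, Subgroup.coe_bot]
end

section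
/- For distinct i, j ∈ {1,2,3}, g_i, g_j ∈ P, and k the remaining index, the product set (X_i g_i)(X_j g_j) equals the coset P a_k g_i g_j; consequently a class T of the partition S meets (X_i g_i)(X_j g_j) (equivalently is contained in it) if and only if T = X_k g_k for some g_k ∈ P. -/
open scoped Pointwise

lemma coset3_mem {G : Type*} [CommGroup G] (S : Set G) (b c x : G) :
    x ∈ S * {b} * {c} ↔ ∃ q ∈ S, x = q * b * c := by
  simp only [Set.mul_singleton, Set.mem_image]
  aesop

lemma coset1_mem {G : Type*} [CommGroup G] (S : Set G) (b x : G) :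
    x ∈ S * {b} ↔ ∃ q ∈ S, x = q * b := by
  simp only [Set.mul_singleton, Set.mem_image]
  aesop

lemma coset_rearrange {G : Type*} [CommGroup G] (S T : Set G) (ai aj gi gj : G) :
    (S * {ai} * {gi}) * (T * {aj} * {gj}) = (S * T) * {ai * aj * (gi * gj)} := by
  rw [mul_mul_mul_comm (S * {ai}) {gi} (T * {aj}) {gj},
    mul_mul_mul_comm S {ai} T {aj}, Set.singleton_mul_singleton,
    Set.singleton_mul_singleton,
    mul_assoc (S * T) ({ai * aj} : Set G) ({gi * gj} : Set G), Set.singleton_mul_singleton]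

lemma fin3_aux : ∀ m i j k : Fin 3, i ≠ j → k ≠ i → k ≠ j → m ≠ i → m ≠ j → m = k := by
  decide

theorem stmt2 {G : Type*} [CommGroup G] [Fintype G] (p : ℕ) (hp : p.Prime) (hp5 : 5 ≤ p)
    (A P : Subgroup G) (hAP_inf : A ⊓ P = ⊥) (hAP_sup : A ⊔ P = ⊤)
    (hA_card : Nat.card A = 4) (hA_exp : ∀ x ∈ A, x ^ 2 = 1)
    (hP_card : Nat.card P = p ^ 2) (hP_exp : ∀ x ∈ P, x ^ p = 1)
    (a : Fin 3 → G) (ha_mem : ∀ i, a i ∈ A) (ha_ne : ∀ i, a i ≠ 1)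
    (ha_inj : Function.Injective a)
    (Psub : Fin 3 → Subgroup G) (hPsub_le : ∀ i, Psub i ≤ P)
    (hPsub_card : ∀ i, Nat.card (Psub i) = p) (hPsub_inj : Function.Injective Psub)
    (X : Fin 3 → Set G) (hX : ∀ i, X i = (Psub i : Set G) * {a i})
    (i j k : Fin 3) (hij : i ≠ j) (hki : k ≠ i) (hkj : k ≠ j)
    (gi gj : G) (hgi : gi ∈ P) (hgj : gj ∈ P) :
    (X i * {gi}) * (X j * {gj}) = (P : Set G) * {a k * (gi * gj)} ∧
    (∀ T ∈ schurClasses P a Psub,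
      ((T ∩ ((X i * {gi}) * (X j * {gj}))).Nonempty ↔
        ∃ gk ∈ P, T = X k * {gk}) ∧
      (T ⊆ (X i * {gi}) * (X j * {gj}) ↔ ∃ gk ∈ P, T = X k * {gk})) := by
  -- if `a m * c = a n * d` with `c, d ∈ P` then `m = n`
  have key : ∀ m n : Fin 3, ∀ c d : G, c ∈ P → d ∈ P → a m * c = a n * d → m = n := by
    intro m n c d hc hd h
    have h2 : a m * (a n)⁻¹ = d * c⁻¹ := by
      rw [← div_eq_mul_inv, ← div_eq_mul_inv, div_eq_div_iff_mul_eq_mul, h, mul_comm]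
    have hinA : a m * (a n)⁻¹ ∈ A := A.mul_mem (ha_mem m) (A.inv_mem (ha_mem n))
    have hinP : a m * (a n)⁻¹ ∈ P := by rw [h2]; exact P.mul_mem hd (P.inv_mem hc)
    have h3 : a m * (a n)⁻¹ ∈ A ⊓ P := Subgroup.mem_inf.mpr ⟨hinA, hinP⟩
    rw [hAP_inf, Subgroup.mem_bot, mul_inv_eq_one] at h3
    exact ha_inj h3
  -- `a m * c ∉ P` whenever `c ∈ P`
  have hanotP : ∀ m : Fin 3, ∀ c : G, c ∈ P → a m * c ∉ P := by
    intro m c hc h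
    have h1 : a m ∈ A ⊓ P := by
      refine ⟨ha_mem m, ?_⟩
      have h0 : a m = (a m * c) * c⁻¹ := (mul_inv_cancel_right _ _).symm
      rw [h0]; exact P.mul_mem h (P.inv_mem hc)
    rw [hAP_inf, Subgroup.mem_bot] at h1
    exact ha_ne m h1
  -- `a i * a j = a k`
  have haij : a i * a j = a k := by
    have hsfin : ({1, a 0, a 1, a 2} : Set G).ncard = 4 := by
      rw [Set.ncard_insert_of_notMem (by
          simp only [Set.mem_insert_iff, Set.mem_singleton_iff]
          push_neg
          exact ⟨fun h => ha_ne 0 h.symm, fun h => ha_ne 1 h.symm, fun h => ha_ne 2 h.symm⟩),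
        Set.ncard_insert_of_notMem (by
          simp only [Set.mem_insert_iff, Set.mem_singleton_iff]
          push_neg
          exact ⟨fun h => absurd (ha_inj h) (by decide),
            fun h => absurd (ha_inj h) (by decide)⟩),
        Set.ncard_insert_of_notMem (by
          simp only [Set.mem_singleton_iff]
          exact fun h => absurd (ha_inj h) (by decide)),
        Set.ncard_singleton]
    have hsub : ({1, a 0, a 1, a 2} : Set G) ⊆ (A : Set G) := by
      intro x hx
      simp only [Set.mem_insert_iff, Set.mem_singleton_iff] at hx
      rcases hx with rfl | rfl | rfl | rfl
      · exact one_mem A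
      · exact ha_mem 0
      · exact ha_mem 1
      · exact ha_mem 2
    have hAn : (A : Set G).ncard = 4 := by
      rw [← Nat.card_coe_set_eq]
      exact hA_card
    have hAeq : ({1, a 0, a 1, a 2} : Set G) = (A : Set G) :=
      Set.eq_of_subset_of_ncard_le hsub (by rw [hAn, hsfin]) (Set.toFinite _)
    have hmemA : a i * a j ∈ (A : Set G) := mul_mem (ha_mem i) (ha_mem j)
    rw [← hAeq] at hmemA
    simp only [Set.mem_insert_iff, Set.mem_singleton_iff] at hmemA
    have hne1 : a i * a j ≠ 1 := by
      intro h
      have h1 : a i = (a j)⁻¹ := eq_inv_of_mul_eq_one_left h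
      have hjinv : (a j)⁻¹ = a j := by
        rw [inv_eq_iff_mul_eq_one, ← sq]; exact hA_exp _ (ha_mem j)
      rw [hjinv] at h1
      exact hij (ha_inj h1)
    have step : ∀ m : Fin 3, a i * a j = a m → a i * a j = a k := by
      intro m hm
      have hmi : m ≠ i := by
        intro hmi
        subst hmi
        exact ha_ne j (mul_left_cancel (show a m * a j = a m * 1 by rw [mul_one, hm]))
      have hmj : m ≠ j := by
        intro hmj
        subst hmj
        exact ha_ne i (mul_right_cancel (show a i * a m = 1 * a m by rw [one_mul, hm]))
      exact hm.trans (congrArg a (fin3_aux m i j k hij hki hkj hmi hmj))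
    rcases hmemA with h | h | h | h
    · exact absurd h hne1
    · exact step 0 h
    · exact step 1 h
    · exact step 2 h
  -- `Psub i * Psub j = P` as sets
  have hPP : (Psub i : Set G) * (Psub j : Set G) = (P : Set G) := by
    have hsup : Psub i ⊔ Psub j = P := by
      have hle : Psub i ⊔ Psub j ≤ P := sup_le (hPsub_le i) (hPsub_le j)
      have hd : Nat.card (Psub i ⊔ Psub j : Subgroup G) ∣ p ^ 2 := by
        rw [← hP_card]; exact Subgroup.card_dvd_of_le hle
      have hdi : p ∣ Nat.card (Psub i ⊔ Psub j : Subgroup G) := by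
        rw [← hPsub_card i]; exact Subgroup.card_dvd_of_le le_sup_left
      obtain ⟨e, he2, hcard⟩ := (Nat.dvd_prime_pow hp).mp hd
      interval_cases e
      · rw [hcard, pow_zero] at hdi
        exact absurd (Nat.le_of_dvd one_pos hdi) (by omega)
      · exfalso
        rw [pow_one] at hcard
        have h1 : Psub i = Psub i ⊔ Psub j :=
          Subgroup.eq_of_le_of_card_ge le_sup_left (by rw [hcard, hPsub_card i])
        have h2 : Psub j ≤ Psub i := h1 ▸ le_sup_right
        have h3 : Psub j = Psub i :=
          Subgroup.eq_of_le_of_card_ge h2 (by rw [hPsub_card i, hPsub_card j])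
        exact hij (hPsub_inj h3.symm)
      · exact Subgroup.eq_of_le_of_card_ge hle (by rw [hcard, hP_card])
    rw [← Subgroup.mul_normal (Psub i) (Psub j), hsup]
  -- the product of the two cosets
  have hE : (X i * {gi}) * (X j * {gj}) = (P : Set G) * {a k * (gi * gj)} := by
    rw [hX i, hX j, coset_rearrange, hPP, haij]
  refine ⟨hE, ?_⟩
  intro T hT
  rw [hE]
  rcases hT with ⟨g, hg, rfl⟩ | ⟨m, g, hg, rfl⟩
  · -- singleton class: both sides false
    have hL : ¬ (({g} : Set G) ∩ ((P : Set G) * {a k * (gi * gj)})).Nonempty := by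
      rintro ⟨x, hx1, hx2⟩
      rw [Set.mem_singleton_iff] at hx1
      rw [hx1, coset1_mem] at hx2
      obtain ⟨q, hq, hxq⟩ := hx2
      have hmem : a k * (q * (gi * gj)) ∈ P := by
        have heq : a k * (q * (gi * gj)) = g := by rw [hxq, mul_left_comm]
        rw [heq]; exact hg
      exact hanotP k _ (mul_mem hq (mul_mem hgi hgj)) hmem
    have hR : ¬ ∃ gk ∈ P, ({g} : Set G) = X k * {gk} := by
      rintro ⟨gk, hgk, hTk⟩
      rw [hX k] at hTk
      have hmem : a k * gk ∈ ((Psub k : Set G) * {a k} * {gk}) := by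
        rw [coset3_mem]
        exact ⟨1, one_mem _, by rw [one_mul]⟩
      rw [← hTk, Set.mem_singleton_iff] at hmem
      exact hanotP k gk hgk (hmem ▸ hg)
    refine ⟨⟨fun h => absurd h hL, fun h => absurd h hR⟩, ?_, fun h => absurd h hR⟩
    intro h
    exact absurd ⟨g, rfl, h rfl⟩ hL
  · -- coset class `Psub m * {a m} * {g}`
    by_cases hmk : m = k
    · subst hmk
      have hsubE : ((Psub m : Set G) * {a m} * {g}) ⊆ (P : Set G) * {a m * (gi * gj)} := by
        intro x hx
        rw [coset3_mem] at hx
        obtain ⟨q, hq, rfl⟩ := hx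
        rw [coset1_mem]
        have hident : (q * g * (gi * gj)⁻¹) * (a m * (gi * gj)) = q * a m * g := by
          rw [mul_comm (a m) (gi * gj), ← mul_assoc, inv_mul_cancel_right, mul_assoc,
            mul_comm g (a m), ← mul_assoc]
        exact ⟨q * g * (gi * gj)⁻¹,
          P.mul_mem (P.mul_mem (hPsub_le m hq) hg) (P.inv_mem (P.mul_mem hgi hgj)),
          hident.symm⟩
      have hRHS : ∃ gk ∈ P, ((Psub m : Set G) * {a m} * {g}) = X m * {gk} :=
        ⟨g, hg, by rw [hX m]⟩
      refine ⟨⟨fun _ => hRHS, fun _ => ?_⟩, fun _ => hRHS, fun _ => hsubE⟩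
      refine ⟨a m * g, ?_, hsubE (by rw [coset3_mem]; exact ⟨1, one_mem _, by rw [one_mul]⟩)⟩
      rw [coset3_mem]; exact ⟨1, one_mem _, by rw [one_mul]⟩
    · -- both sides false
      have hL : ¬ (((Psub m : Set G) * {a m} * {g}) ∩
          ((P : Set G) * {a k * (gi * gj)})).Nonempty := by
        rintro ⟨x, hx1, hx2⟩
        rw [coset3_mem] at hx1
        obtain ⟨q, hq, rfl⟩ := hx1
        rw [coset1_mem] at hx2
        obtain ⟨q', hq', heq⟩ := hx2
        have h' : a m * (q * g) = a k * (q' * (gi * gj)) := by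
          rw [mul_left_comm, ← mul_assoc, heq, mul_left_comm]
        exact hmk (key m k _ _ (mul_mem (hPsub_le m hq) hg)
          (mul_mem hq' (mul_mem hgi hgj)) h')
      have hR : ¬ ∃ gk ∈ P, ((Psub m : Set G) * {a m} * {g}) = X k * {gk} := by
        rintro ⟨gk, hgk, hTk⟩
        rw [hX k] at hTk
        have hmem : a m * g ∈ ((Psub m : Set G) * {a m} * {g}) := by
          rw [coset3_mem]; exact ⟨1, one_mem _, by rw [one_mul]⟩
        rw [hTk, coset3_mem] at hmem
        obtain ⟨q, hq, heq⟩ := hmem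
        have h' : a m * g = a k * (q * gk) := by rw [heq, mul_assoc, mul_left_comm]
        exact hmk (key m k _ _ hg (mul_mem (hPsub_le k hq) hgk) h')
      refine ⟨⟨fun h => absurd h hL, fun h => absurd h hR⟩, ?_, fun h => absurd h hR⟩
      intro h
      have hmem : a m * g ∈ ((Psub m : Set G) * {a m} * {g}) := by
        rw [coset3_mem]; exact ⟨1, one_mem _, by rw [one_mul]⟩
      exact absurd ⟨a m * g, hmem, h hmem⟩ hL
end

section
/- If i ≠ j and X, Y are subsets of P-cosets in G with rad(X) = P_i and rad(Y) = P_j both of order p and |X| = |Y| = p, then the product XY is a full coset of P. -/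
open scoped Pointwise

lemma coset_of_rad {G : Type*} [CommGroup G] [Fintype G] (p : ℕ) (hp : p.Prime)
    (Pi : Subgroup G) (hPi_card : Nat.card Pi = p)
    (X : Set G) (hradX : radSet X = (Pi : Set G)) (hXcard : Nat.card X = p) :
    ∃ x : G, X = (Pi : Set G) * {x} := by
  rw [Nat.card_coe_set_eq] at hXcard
  have hne : X.Nonempty := Set.nonempty_of_ncard_ne_zero (by simp [hXcard, hp.ne_zero])
  obtain ⟨x, hx⟩ := hne
  refine ⟨x, ?_⟩
  have hsub : (Pi : Set G) * {x} ⊆ X := by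
    rintro z ⟨g, hg, x', hx', rfl⟩
    rw [Set.mem_singleton_iff] at hx'; rw [hx']
    have hgrad : (g : G) ∈ radSet X := by rw [hradX]; exact hg
    have := hgrad.1
    rw [← this]
    exact ⟨x, hx, g, rfl, mul_comm x g⟩
  have hcard : ((Pi : Set G) * {x}).ncard = p := by
    rw [Set.mul_singleton, Set.ncard_image_of_injective _ (mul_left_injective x),
      ← Nat.card_coe_set_eq, SetLike.coe_sort_coe, hPi_card]
  exact (Set.eq_of_subset_of_ncard_le hsub (by omega) X.toFinite).symm

lemma prod_of_distinct {G : Type*} [CommGroup G] [Fintype G] (p : ℕ) (hp : p.Prime)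
    (P Pi Pj : Subgroup G) (hPi_le : Pi ≤ P) (hPj_le : Pj ≤ P)
    (hP_card : Nat.card P = p ^ 2)
    (hPi_card : Nat.card Pi = p) (hPj_card : Nat.card Pj = p) (hne : Pi ≠ Pj) :
    (Pi : Set G) * (Pj : Set G) = (P : Set G) := by
  have hsup_le : Pi ⊔ Pj ≤ P := sup_le hPi_le hPj_le
  have hdvd : Nat.card (Pi ⊔ Pj : Subgroup G) ∣ p ^ 2 := by
    rw [← hP_card]; exact Subgroup.card_dvd_of_le hsup_le
  have hdvd' : p ∣ Nat.card (Pi ⊔ Pj : Subgroup G) := by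
    rw [← hPi_card]; exact Subgroup.card_dvd_of_le le_sup_left
  have hgt : Nat.card (Pi ⊔ Pj : Subgroup G) ≠ p := by
    intro h
    have h1 : Pi = Pi ⊔ Pj := Subgroup.eq_of_le_of_card_ge le_sup_left (by omega)
    have h2 : Pj = Pi ⊔ Pj := Subgroup.eq_of_le_of_card_ge le_sup_right (by omega)
    exact hne (h1.trans h2.symm)
  have hcard : Nat.card (Pi ⊔ Pj : Subgroup G) = p ^ 2 := by
    obtain ⟨k, hk, heq⟩ := (Nat.dvd_prime_pow hp).mp hdvd
    interval_cases k
    · rw [heq] at hdvd'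
      exact absurd (Nat.eq_one_of_dvd_one (by simpa using hdvd')) hp.ne_one
    · rw [heq] at hgt; simp at hgt
    · exact heq
  have : Pi ⊔ Pj = P := Subgroup.eq_of_le_of_card_ge hsup_le (by omega)
  rw [← Subgroup.mul_normal Pi Pj, this]

theorem stmt3 {G : Type*} [CommGroup G] [Fintype G] (p : ℕ) (hp : p.Prime)
    (A P : Subgroup G) (hAP_inf : A ⊓ P = ⊥) (hAP_sup : A ⊔ P = ⊤)
    (hA_card : Nat.card A = 4) (hA_exp : ∀ x ∈ A, x ^ 2 = 1)
    (hP_card : Nat.card P = p ^ 2) (hP_exp : ∀ x ∈ P, x ^ p = 1)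
    (Pi Pj : Subgroup G) (hPi_le : Pi ≤ P) (hPj_le : Pj ≤ P)
    (hPi_card : Nat.card Pi = p) (hPj_card : Nat.card Pj = p) (hne : Pi ≠ Pj)
    (X Y : Set G)
    (hXcoset : ∃ g : G, X ⊆ (P : Set G) * {g}) (hYcoset : ∃ g : G, Y ⊆ (P : Set G) * {g})
    (hradX : radSet X = (Pi : Set G)) (hradY : radSet Y = (Pj : Set G))
    (hXcard : Nat.card X = p) (hYcard : Nat.card Y = p) :
    ∃ g : G, X * Y = (P : Set G) * {g} := by
  obtain ⟨x, hX⟩ := coset_of_rad p hp Pi hPi_card X hradX hXcard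
  obtain ⟨y, hY⟩ := coset_of_rad p hp Pj hPj_card Y hradY hYcard
  refine ⟨x * y, ?_⟩
  rw [hX, hY, mul_mul_mul_comm,
    prod_of_distinct p hp P Pi Pj hPi_le hPj_le hP_card hPi_card hPj_card hne,
    Set.singleton_mul_singleton]
end

section
/- For distinct i, j ∈ {1,2,3}, every class of the partition S equals the intersection of a class of S_i with a class of S_j; that is, S = {T_i ∩ T_j : T_i ∈ S_i, T_j ∈ S_j} (discarding empty intersections). -/
open scoped Pointwise

/-- The partition `S_i = {{g}, X_j g, X_k g ({j,k} = {1,2,3}∖{i}), Y_i : g ∈ P}`,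
where `X l = P_l a_l` and `Y i = P a_i`. -/
def fusionClasses {G : Type*} [CommGroup G] (P : Subgroup G) (a : Fin 3 → G)
    (Psub : Fin 3 → Subgroup G) (i : Fin 3) : Set (Set G) :=
  {T | (∃ g ∈ P, T = {g}) ∨
       (∃ l : Fin 3, l ≠ i ∧ ∃ g ∈ P, T = (Psub l : Set G) * {a l} * {g}) ∨
       T = (P : Set G) * {a i}}

/-!
Since `A ∩ P = 1` and the `aₗ` are distinct elements of `A`, the cosets `P aₗ` are
pairwise disjoint. Each `Xₗ g` is a coset of `Pₗ` inside `P aₗ`, so a class of `S_i` and a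
class of `S_j` meet only if one of them is a singleton, or both are cosets of the same `Pₗ`
(hence equal), or one is `Xₗ g ⊆ Yₗ`; and `Y_i ∩ Y_j = ∅`. Conversely `X_i g = Y_i ∩ X_i g`,
`X_j g = X_j g ∩ Y_j`, and `Xₗ g` for the third index `l` is a class of both partitions.
-/

theorem Set.mul_singleton_mul_singleton {M : Type*} [Semigroup M] (s : Set M) (x y : M) :
    s * {x} * {y} = s * {x * y} := by
  rw [mul_assoc, Set.singleton_mul_singleton]

section RightCoset

variable {G : Type*} [Group G] {A H K : Subgroup G} {x y : G}

theorem Subgroup.mem_mul_singleton_iff : y ∈ (H : Set G) * {x} ↔ y * x⁻¹ ∈ H := by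
  rw [Set.mul_singleton]
  constructor
  · rintro ⟨h, hh, rfl⟩
    simpa using hh
  · intro hy
    exact ⟨y * x⁻¹, hy, by simp⟩

theorem Subgroup.mul_singleton_eq_of_mem (hy : y ∈ (H : Set G) * {x}) :
    (H : Set G) * {y} = H * {x} := by
  rw [Subgroup.mem_mul_singleton_iff] at hy
  ext z
  simp only [Subgroup.mem_mul_singleton_iff]
  rw [← H.mul_mem_cancel_right hy]
  group

theorem Subgroup.mul_singleton_eq_of_inter_nonempty
    (h : ((H : Set G) * {x} ∩ (H * {y})).Nonempty) : (H : Set G) * {x} = H * {y} := by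
  obtain ⟨z, hz⟩ := h
  rw [← Subgroup.mul_singleton_eq_of_mem hz.1, Subgroup.mul_singleton_eq_of_mem hz.2]

theorem Subgroup.mul_singleton_subset_of_le (hKH : K ≤ H) (hy : y ∈ (H : Set G) * {x}) :
    (K : Set G) * {y} ⊆ H * {x} := by
  rw [← Subgroup.mul_singleton_eq_of_mem hy]
  exact Set.mul_subset_mul_right hKH

theorem Subgroup.eq_of_mul_singleton_inter_nonempty (hAH : A ⊓ H = ⊥) (hx : x ∈ A)
    (hy : y ∈ A) (h : ((H : Set G) * {x} ∩ (H * {y})).Nonempty) : x = y := by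
  have hxy : x * y⁻¹ ∈ H := by
    rw [← Subgroup.mem_mul_singleton_iff, ← Subgroup.mul_singleton_eq_of_inter_nonempty h,
      Subgroup.mem_mul_singleton_iff, mul_inv_cancel]
    exact H.one_mem
  have : x * y⁻¹ ∈ A ⊓ H := ⟨A.mul_mem hx (A.inv_mem hy), hxy⟩
  rwa [hAH, Subgroup.mem_bot, mul_inv_eq_one] at this

end RightCoset

theorem Subgroup.mul_singleton_mul_singleton_subset {G : Type*} [CommGroup G]
    {H K : Subgroup G} {x g : G} (hKH : K ≤ H) (hg : g ∈ H) :
    (K : Set G) * {x} * {g} ⊆ (H : Set G) * {x} := by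
  rw [Set.mul_singleton_mul_singleton]
  refine Subgroup.mul_singleton_subset_of_le hKH ?_
  rwa [Subgroup.mem_mul_singleton_iff, mul_inv_cancel_comm]

section Classes

variable {G : Type*} [CommGroup G] {P : Subgroup G} {a : Fin 3 → G}
  {Psub : Fin 3 → Subgroup G} {i j : Fin 3}

theorem exists_inter_eq_of_mem_schurClasses (hle : ∀ l, Psub l ≤ P) (hij : i ≠ j)
    {T : Set G} (hT : T ∈ schurClasses P a Psub) :
    ∃ Ti ∈ fusionClasses P a Psub i, ∃ Tj ∈ fusionClasses P a Psub j,
      T = Ti ∩ Tj ∧ T.Nonempty := by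
  obtain ⟨g, hg, rfl⟩ | ⟨l, g, hg, rfl⟩ := hT
  · exact ⟨{g}, Or.inl ⟨g, hg, rfl⟩, {g}, Or.inl ⟨g, hg, rfl⟩, (Set.inter_self _).symm,
      Set.singleton_nonempty g⟩
  have hX_mem : ∀ {k}, l ≠ k → (Psub l : Set G) * {a l} * {g} ∈ fusionClasses P a Psub k :=
    fun hlk => Or.inr (Or.inl ⟨l, hlk, g, hg, rfl⟩)
  have hY_mem : (P : Set G) * {a l} ∈ fusionClasses P a Psub l := Or.inr (Or.inr rfl)
  have hXY := Subgroup.mul_singleton_mul_singleton_subset (x := a l) (hle l) hg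
  have hX_ne := ((OneMemClass.coe_nonempty (Psub l)).mul (Set.singleton_nonempty (a l))).mul
    (Set.singleton_nonempty g)
  rcases eq_or_ne l i with rfl | hli
  · exact ⟨_, hY_mem, _, hX_mem hij, (Set.inter_eq_right.2 hXY).symm, hX_ne⟩
  rcases eq_or_ne l j with rfl | hlj
  · exact ⟨_, hX_mem hli, _, hY_mem, (Set.inter_eq_left.2 hXY).symm, hX_ne⟩
  exact ⟨_, hX_mem hli, _, hX_mem hlj, (Set.inter_self _).symm, hX_ne⟩

theorem inter_mem_schurClasses
    (hsep : ∀ l m, ((P : Set G) * {a l} ∩ (P * {a m})).Nonempty → l = m)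
    (hle : ∀ l, Psub l ≤ P) (hij : i ≠ j) {Ti Tj : Set G}
    (hTi : Ti ∈ fusionClasses P a Psub i) (hTj : Tj ∈ fusionClasses P a Psub j)
    (hne : (Ti ∩ Tj).Nonempty) : Ti ∩ Tj ∈ schurClasses P a Psub := by
  have hXY : ∀ {l g}, g ∈ P → (Psub l : Set G) * {a l} * {g} ⊆ (P : Set G) * {a l} :=
    fun hg => Subgroup.mul_singleton_mul_singleton_subset (hle _) hg
  obtain ⟨x, hxi, hxj⟩ := hne
  rcases hTi with ⟨g, hg, rfl⟩ | ⟨l, -, g, hg, rfl⟩ | rfl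
  · obtain rfl := Set.mem_singleton_iff.1 hxi
    rw [Set.singleton_inter_of_mem hxj]
    exact Or.inl ⟨_, hg, rfl⟩
  · rcases hTj with ⟨g', hg', rfl⟩ | ⟨m, -, g', hg', rfl⟩ | rfl
    · obtain rfl := Set.mem_singleton_iff.1 hxj
      rw [Set.inter_singleton_of_mem hxi]
      exact Or.inl ⟨_, hg', rfl⟩
    · obtain rfl := hsep l m ⟨x, Set.mem_inter (hXY hg hxi) (hXY hg' hxj)⟩
      have hXX : (Psub l : Set G) * {a l} * {g} = (Psub l : Set G) * {a l} * {g'} := by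
        simp only [Set.mul_singleton_mul_singleton] at hxi hxj ⊢
        exact Subgroup.mul_singleton_eq_of_inter_nonempty ⟨x, Set.mem_inter hxi hxj⟩
      rw [hXX, Set.inter_self]
      exact Or.inr ⟨l, g', hg', rfl⟩
    · obtain rfl := hsep l j ⟨x, Set.mem_inter (hXY hg hxi) hxj⟩
      rw [Set.inter_eq_left.2 (hXY hg)]
      exact Or.inr ⟨l, g, hg, rfl⟩
  · rcases hTj with ⟨g', hg', rfl⟩ | ⟨m, -, g', hg', rfl⟩ | rfl
    · obtain rfl := Set.mem_singleton_iff.1 hxj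
      rw [Set.inter_singleton_of_mem hxi]
      exact Or.inl ⟨_, hg', rfl⟩
    · obtain rfl := hsep m i ⟨x, Set.mem_inter (hXY hg' hxj) hxi⟩
      rw [Set.inter_eq_right.2 (hXY hg')]
      exact Or.inr ⟨m, g', hg', rfl⟩
    · exact absurd (hsep i j ⟨x, Set.mem_inter hxi hxj⟩) hij

end Classes

theorem stmt4_general {G : Type*} [CommGroup G]
    (A P : Subgroup G) (hAP_inf : A ⊓ P = ⊥)
    (a : Fin 3 → G) (ha_mem : ∀ i, a i ∈ A)
    (ha_inj : Function.Injective a)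
    (Psub : Fin 3 → Subgroup G) (hPsub_le : ∀ i, Psub i ≤ P)
    (i j : Fin 3) (hij : i ≠ j) :
    schurClasses P a Psub =
      {T | ∃ Ti ∈ fusionClasses P a Psub i, ∃ Tj ∈ fusionClasses P a Psub j,
        T = Ti ∩ Tj ∧ T.Nonempty} := by
  have hsep : ∀ l m, ((P : Set G) * {a l} ∩ (P * {a m})).Nonempty → l = m := fun l m h =>
    ha_inj (Subgroup.eq_of_mul_singleton_inter_nonempty hAP_inf (ha_mem l) (ha_mem m) h)
  ext T
  constructor
  · exact exists_inter_eq_of_mem_schurClasses hPsub_le hij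
  · rintro ⟨Ti, hTi, Tj, hTj, rfl, hne⟩
    exact inter_mem_schurClasses hsep hPsub_le hij hTi hTj hne

theorem stmt4 {G : Type*} [CommGroup G] [Fintype G] (p : ℕ) (hp : p.Prime) (hp5 : 5 ≤ p)
    (A P : Subgroup G) (hAP_inf : A ⊓ P = ⊥) (hAP_sup : A ⊔ P = ⊤)
    (hA_card : Nat.card A = 4) (hA_exp : ∀ x ∈ A, x ^ 2 = 1)
    (hP_card : Nat.card P = p ^ 2) (hP_exp : ∀ x ∈ P, x ^ p = 1)
    (a : Fin 3 → G) (ha_mem : ∀ i, a i ∈ A) (ha_ne : ∀ i, a i ≠ 1)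
    (ha_inj : Function.Injective a)
    (Psub : Fin 3 → Subgroup G) (hPsub_le : ∀ i, Psub i ≤ P)
    (hPsub_card : ∀ i, Nat.card (Psub i) = p) (hPsub_inj : Function.Injective Psub)
    (i j : Fin 3) (hij : i ≠ j) :
    schurClasses P a Psub =
      {T | ∃ Ti ∈ fusionClasses P a Psub i, ∃ Tj ∈ fusionClasses P a Psub j,
        T = Ti ∩ Tj ∧ T.Nonempty} :=
  stmt4_general A P hAP_inf a ha_mem ha_inj Psub hPsub_le i j hij
end

section
/- For i ∈ {1,2,3} with complement {j,k}, the subgroups U_j = P_j⟨a_j⟩ and U_k = P_k⟨a_k⟩ satisfy U_j ∩ U_k = {1} and G = U_j × U_k, and moreover X_j X_k = P a_i. -/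
/-!
Since `A ⊓ P = ⊥` and `G` is abelian, each element of `U_j ⊔ U_k` factors uniquely into a
`P`-part and an `A`-part, so `U_j ⊓ U_k = ⊥` reduces to `P_j ⊓ P_k = ⊥` (distinct subgroups of
prime order) and `⟨a_j⟩ ⊓ ⟨a_k⟩ = ⊥` (distinct involutions). By order counting
`P_j ⊔ P_k = P`, and in the Klein four-group `A = {1, a_j, a_k, a_j a_k}`, whence
`⟨a_j⟩ ⊔ ⟨a_k⟩ = A` and `a_j a_k = a_i`. The three claims follow.
-/

open scoped Pointwise

namespace Subgroup

section Group

variable {G : Type*} [Group G]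

theorem inf_eq_bot_of_card_eq_prime {p : ℕ} (hp : p.Prime) {H K : Subgroup G}
    (hH : Nat.card H = p) (hK : Nat.card K = p) (hHK : H ≠ K) : H ⊓ K = ⊥ := by
  have : Finite H := Nat.finite_of_card_ne_zero (hH ▸ hp.ne_zero)
  have : Finite K := Nat.finite_of_card_ne_zero (hK ▸ hp.ne_zero)
  have hdvd : Nat.card (H ⊓ K : Subgroup G) ∣ p := hH ▸ card_dvd_of_le inf_le_left
  rcases hp.eq_one_or_self_of_dvd _ hdvd with h | h
  · exact card_eq_one.mp h
  · refine absurd ?_ hHK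
    calc H = H ⊓ K := (eq_of_le_of_card_ge inf_le_left (by rw [h, hH])).symm
      _ = K := eq_of_le_of_card_ge inf_le_right (by rw [h, hK])

theorem sup_eq_of_card_eq_prime_sq {p : ℕ} (hp : p.Prime) {H K P : Subgroup G}
    (hH : Nat.card H = p) (hK : Nat.card K = p) (hHK : H ≠ K) (hHP : H ≤ P) (hKP : K ≤ P)
    (hP : Nat.card P = p ^ 2) : H ⊔ K = P := by
  have : Finite P := Nat.finite_of_card_ne_zero (hP ▸ pow_ne_zero 2 hp.ne_zero)
  have hle : H ⊔ K ≤ P := sup_le hHP hKP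
  obtain ⟨m, hm, hcard⟩ := (Nat.dvd_prime_pow hp).mp (hP ▸ card_dvd_of_le hle)
  have hp_dvd : p ∣ Nat.card (H ⊔ K : Subgroup G) := hH ▸ card_dvd_of_le le_sup_left
  interval_cases m
  · rw [hcard, pow_zero, Nat.dvd_one] at hp_dvd
    exact absurd hp_dvd hp.ne_one
  · refine absurd ?_ hHK
    rw [pow_one] at hcard
    have : Finite (H ⊔ K : Subgroup G) := Nat.finite_of_card_ne_zero (hcard ▸ hp.ne_zero)
    calc H = H ⊔ K := eq_of_le_of_card_ge le_sup_left (by rw [hcard, hH])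
      _ = K := (eq_of_le_of_card_ge le_sup_right (by rw [hcard, hK])).symm
  · exact eq_of_le_of_card_ge hle (by rw [hcard, hP])

theorem mem_zpowers_iff_of_sq_eq_one {x y : G} (hx : x ^ 2 = 1) :
    y ∈ zpowers x ↔ y = 1 ∨ y = x := by
  refine ⟨fun hy => ?_, ?_⟩
  · obtain ⟨n, rfl⟩ := mem_zpowers_iff.mp hy
    rw [zpow_eq_zpow_emod' n hx]
    rcases Int.emod_two_eq_zero_or_one n with h | h <;> simp [h]
  · rintro (rfl | rfl)
    exacts [one_mem _, mem_zpowers _]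

theorem zpowers_inf_zpowers_eq_bot_of_sq_eq_one {x y : G} (hx : x ^ 2 = 1) (hy : y ^ 2 = 1)
    (hxy : x ≠ y) : zpowers x ⊓ zpowers y = ⊥ := by
  refine (eq_bot_iff_forall _).mpr fun z hz => ?_
  rw [mem_inf, mem_zpowers_iff_of_sq_eq_one hx, mem_zpowers_iff_of_sq_eq_one hy] at hz
  obtain ⟨h | rfl, h'⟩ := hz
  · exact h
  · exact h'.resolve_right hxy

section KleinFour

variable {A : Subgroup G}

theorem coe_eq_of_card_eq_four (hA : Nat.card A = 4) (hA2 : ∀ z ∈ A, z ^ 2 = 1) {x y : G}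
    (hxA : x ∈ A) (hyA : y ∈ A) (hx : x ≠ 1) (hy : y ≠ 1) (hxy : x ≠ y) :
    (A : Set G) = {1, x, y, x * y} := by
  have hxy1 : x * y ≠ 1 := fun h =>
    hxy (eq_inv_of_mul_eq_one_left h |>.trans (inv_eq_of_mul_eq_one_left (sq y ▸ hA2 y hyA)))
  have hxyx : x * y ≠ x := fun h => hy (mul_eq_left.mp h)
  have hxyy : x * y ≠ y := fun h => hx (mul_eq_right.mp h)
  have hsub : ({1, x, y, x * y} : Set G) ⊆ A := by
    rintro z (rfl | rfl | rfl | rfl)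
    exacts [one_mem A, hxA, hyA, mul_mem hxA hyA]
  have : Finite A := Nat.finite_of_card_ne_zero (hA ▸ four_ne_zero)
  refine (Set.eq_of_subset_of_ncard_le hsub ?_ (Set.toFinite _)).symm
  rw [← Nat.card_coe_set_eq, SetLike.coe_sort_coe, hA, Set.ncard_insert_of_notMem,
    Set.ncard_insert_of_notMem, Set.ncard_pair hxyy.symm]
  · simp [hxy, hxyx.symm]
  · simp [hx.symm, hy.symm, hxy1.symm]

theorem zpowers_sup_zpowers_eq_of_card_eq_four (hA : Nat.card A = 4)
    (hA2 : ∀ z ∈ A, z ^ 2 = 1) {x y : G} (hxA : x ∈ A) (hyA : y ∈ A) (hx : x ≠ 1) (hy : y ≠ 1)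
    (hxy : x ≠ y) : zpowers x ⊔ zpowers y = A := by
  refine le_antisymm (sup_le (zpowers_le.mpr hxA) (zpowers_le.mpr hyA)) fun z hz => ?_
  have hx' : x ∈ zpowers x ⊔ zpowers y := mem_sup_left (mem_zpowers x)
  have hy' : y ∈ zpowers x ⊔ zpowers y := mem_sup_right (mem_zpowers y)
  rw [← SetLike.mem_coe, coe_eq_of_card_eq_four hA hA2 hxA hyA hx hy hxy] at hz
  rcases hz with rfl | rfl | rfl | rfl
  exacts [one_mem _, hx', hy', mul_mem hx' hy']

theorem eq_mul_of_card_eq_four (hA : Nat.card A = 4) (hA2 : ∀ z ∈ A, z ^ 2 = 1) {x y z : G}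
    (hxA : x ∈ A) (hyA : y ∈ A) (hzA : z ∈ A) (hx : x ≠ 1) (hy : y ≠ 1) (hz : z ≠ 1)
    (hxy : x ≠ y) (hzx : z ≠ x) (hzy : z ≠ y) : z = x * y := by
  rw [← SetLike.mem_coe, coe_eq_of_card_eq_four hA hA2 hxA hyA hx hy hxy] at hzA
  simpa [hz, hzx, hzy] using hzA

end KleinFour

end Group

section CommGroup

variable {G : Type*} [CommGroup G]

theorem sup_inf_sup_eq_bot {A P H₁ H₂ K₁ K₂ : Subgroup G} (hAP : A ⊓ P = ⊥)
    (hH₁ : H₁ ≤ P) (hH₂ : H₂ ≤ P) (hK₁ : K₁ ≤ A) (hK₂ : K₂ ≤ A)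
    (hH : H₁ ⊓ H₂ = ⊥) (hK : K₁ ⊓ K₂ = ⊥) : (H₁ ⊔ K₁) ⊓ (H₂ ⊔ K₂) = ⊥ := by
  refine (eq_bot_iff_forall _).mpr fun z hz => ?_
  obtain ⟨⟨h₁, hh₁, k₁, hk₁, rfl⟩, ⟨h₂, hh₂, k₂, hk₂, he⟩⟩ :=
    And.imp mem_sup.mp mem_sup.mp (mem_inf.mp hz)
  have hhk : h₁ / h₂ = k₂ / k₁ := div_eq_div_iff_mul_eq_mul.mpr (he.symm.trans (mul_comm h₂ k₂))
  have hh₁₂ : h₁ / h₂ = 1 := by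
    refine (eq_bot_iff_forall _).mp hAP _ (mem_inf.mpr ⟨?_, div_mem (hH₁ hh₁) (hH₂ hh₂)⟩)
    exact hhk ▸ div_mem (hK₂ hk₂) (hK₁ hk₁)
  have hk₁₂ : k₂ / k₁ = 1 := hhk ▸ hh₁₂
  rw [div_eq_one] at hh₁₂ hk₁₂
  subst hh₁₂ hk₁₂
  rw [(eq_bot_iff_forall _).mp hH h₁ (mem_inf.mpr ⟨hh₁, hh₂⟩),
    (eq_bot_iff_forall _).mp hK k₂ (mem_inf.mpr ⟨hk₁, hk₂⟩), one_mul]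

end CommGroup

end Subgroup

open Subgroup in
theorem stmt5_general {G : Type*} [CommGroup G] (p : ℕ) (hp : p.Prime)
    (A P : Subgroup G) (hAP_inf : A ⊓ P = ⊥) (hAP_sup : A ⊔ P = ⊤)
    (hA_card : Nat.card A = 4) (hA_exp : ∀ x ∈ A, x ^ 2 = 1)
    (hP_card : Nat.card P = p ^ 2)
    (a : Fin 3 → G) (ha_mem : ∀ i, a i ∈ A) (ha_ne : ∀ i, a i ≠ 1)
    (ha_inj : Function.Injective a)
    (Psub : Fin 3 → Subgroup G) (hPsub_le : ∀ i, Psub i ≤ P)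
    (hPsub_card : ∀ i, Nat.card (Psub i) = p) (hPsub_inj : Function.Injective Psub)
    (i j k : Fin 3) (hij : i ≠ j) (hki : k ≠ i) (hkj : k ≠ j) :
    (Psub j ⊔ Subgroup.zpowers (a j)) ⊓ (Psub k ⊔ Subgroup.zpowers (a k)) = ⊥ ∧
    (Psub j ⊔ Subgroup.zpowers (a j)) ⊔ (Psub k ⊔ Subgroup.zpowers (a k)) = ⊤ ∧
    ((Psub j : Set G) * {a j}) * ((Psub k : Set G) * {a k}) = (P : Set G) * {a i} := by
  have hjk : j ≠ k := hkj.symm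
  have hPsub_sup : Psub j ⊔ Psub k = P := sup_eq_of_card_eq_prime_sq hp (hPsub_card j)
    (hPsub_card k) (hPsub_inj.ne hjk) (hPsub_le j) (hPsub_le k) hP_card
  have hzpowers_sup : zpowers (a j) ⊔ zpowers (a k) = A :=
    zpowers_sup_zpowers_eq_of_card_eq_four hA_card hA_exp (ha_mem j) (ha_mem k) (ha_ne j)
      (ha_ne k) (ha_inj.ne hjk)
  have ha_mul : a i = a j * a k :=
    eq_mul_of_card_eq_four hA_card hA_exp (ha_mem j) (ha_mem k) (ha_mem i) (ha_ne j) (ha_ne k)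
      (ha_ne i) (ha_inj.ne hjk) (ha_inj.ne hij) (ha_inj.ne hki.symm)
  refine ⟨?_, ?_, ?_⟩
  · refine sup_inf_sup_eq_bot hAP_inf (hPsub_le j) (hPsub_le k) (zpowers_le.mpr (ha_mem j))
      (zpowers_le.mpr (ha_mem k)) ?_ ?_
    · exact inf_eq_bot_of_card_eq_prime hp (hPsub_card j) (hPsub_card k) (hPsub_inj.ne hjk)
    · exact zpowers_inf_zpowers_eq_bot_of_sq_eq_one (hA_exp _ (ha_mem j)) (hA_exp _ (ha_mem k))
        (ha_inj.ne hjk)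
  · rw [sup_sup_sup_comm, hPsub_sup, hzpowers_sup, sup_comm, hAP_sup]
  · rw [mul_mul_mul_comm, ← mul_normal, hPsub_sup, Set.singleton_mul_singleton, ha_mul]

theorem stmt5 {G : Type*} [CommGroup G] [Fintype G] (p : ℕ) (hp : p.Prime) (hp5 : 5 ≤ p)
    (A P : Subgroup G) (hAP_inf : A ⊓ P = ⊥) (hAP_sup : A ⊔ P = ⊤)
    (hA_card : Nat.card A = 4) (hA_exp : ∀ x ∈ A, x ^ 2 = 1)
    (hP_card : Nat.card P = p ^ 2) (hP_exp : ∀ x ∈ P, x ^ p = 1)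
    (a : Fin 3 → G) (ha_mem : ∀ i, a i ∈ A) (ha_ne : ∀ i, a i ≠ 1)
    (ha_inj : Function.Injective a)
    (Psub : Fin 3 → Subgroup G) (hPsub_le : ∀ i, Psub i ≤ P)
    (hPsub_card : ∀ i, Nat.card (Psub i) = p) (hPsub_inj : Function.Injective Psub)
    (i j k : Fin 3) (hij : i ≠ j) (hki : k ≠ i) (hkj : k ≠ j) :
    (Psub j ⊔ Subgroup.zpowers (a j)) ⊓ (Psub k ⊔ Subgroup.zpowers (a k)) = ⊥ ∧
    (Psub j ⊔ Subgroup.zpowers (a j)) ⊔ (Psub k ⊔ Subgroup.zpowers (a k)) = ⊤ ∧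
    ((Psub j : Set G) * {a j}) * ((Psub k : Set G) * {a k}) = (P : Set G) * {a i} :=
  stmt5_general p hp A P hAP_inf hAP_sup hA_card hA_exp hP_card a ha_mem ha_ne ha_inj Psub hPsub_le
    hPsub_card hPsub_inj i j k hij hki hkj
end

section
/- In an abelian group E written multiplicatively, suppose E₁, E₂, E₃ are cyclic subgroups of odd prime order p ≥ 5 with pairwise trivial intersections, and s₁ ∈ E₁, s₂ ∈ E₂, s₃ ∈ E₃ satisfy s₁⁻¹s₂ ∈ E₃, s₂⁻¹s₃ ∈ E₁, s₃⁻¹s₁ ∈ E₂. Then s₁ = s₂ = s₃ = 1. -/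
theorem stmt7 {E : Type*} [CommGroup E] (p : ℕ) (hp : p.Prime) (hp5 : 5 ≤ p)
    (E1 E2 E3 : Subgroup E)
    (h1 : Nat.card E1 = p) (h2 : Nat.card E2 = p) (h3 : Nat.card E3 = p)
    (h1c : IsCyclic E1) (h2c : IsCyclic E2) (h3c : IsCyclic E3)
    (h12 : E1 ⊓ E2 = ⊥) (h13 : E1 ⊓ E3 = ⊥) (h23 : E2 ⊓ E3 = ⊥)
    (s1 s2 s3 : E) (hs1 : s1 ∈ E1) (hs2 : s2 ∈ E2) (hs3 : s3 ∈ E3)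
    (ha : s1⁻¹ * s2 ∈ E3) (hb : s2⁻¹ * s3 ∈ E1) (hc : s3⁻¹ * s1 ∈ E2) :
    s1 = 1 ∧ s2 = 1 ∧ s3 = 1 := by
  have hw1a : s1 * s3 * s2⁻¹ ∈ E1 := by
    have := mul_mem hs1 hb
    have e : s1 * (s2⁻¹ * s3) = s1 * s3 * s2⁻¹ := by
      simp only [mul_inv_rev, inv_inv, mul_comm, mul_left_comm, mul_assoc]
    rwa [e] at this
  have hw1b : s1 * s3 * s2⁻¹ ∈ E3 := by
    have := mul_mem hs3 (inv_mem ha)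
    have e : s3 * (s1⁻¹ * s2)⁻¹ = s1 * s3 * s2⁻¹ := by
      simp only [mul_inv_rev, inv_inv, mul_comm, mul_left_comm, mul_assoc]
    rwa [e] at this
  have hw1 : s1 * s3 * s2⁻¹ = 1 := by
    have : s1 * s3 * s2⁻¹ ∈ E1 ⊓ E3 := ⟨hw1a, hw1b⟩
    rwa [h13, Subgroup.mem_bot] at this
  have hw2a : s1 * s2 * s3⁻¹ ∈ E1 := by
    have := mul_mem hs1 (inv_mem hb)
    have e : s1 * (s2⁻¹ * s3)⁻¹ = s1 * s2 * s3⁻¹ := by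
      simp only [mul_inv_rev, inv_inv, mul_comm, mul_left_comm, mul_assoc]
    rwa [e] at this
  have hw2b : s1 * s2 * s3⁻¹ ∈ E2 := by
    have := mul_mem hs2 hc
    have e : s2 * (s3⁻¹ * s1) = s1 * s2 * s3⁻¹ := by
      simp only [mul_inv_rev, inv_inv, mul_comm, mul_left_comm, mul_assoc]
    rwa [e] at this
  have hw2 : s1 * s2 * s3⁻¹ = 1 := by
    have : s1 * s2 * s3⁻¹ ∈ E1 ⊓ E2 := ⟨hw2a, hw2b⟩
    rwa [h12, Subgroup.mem_bot] at this
  have h23' : s2 = s1 * s3 := by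
    rw [mul_inv_eq_one] at hw1; exact hw1.symm
  have h32' : s3 = s1 * s2 := by
    rw [mul_inv_eq_one] at hw2; exact hw2.symm
  have hsq : s1 ^ 2 = 1 := by
    have : s2 = s1 * (s1 * s2) := by nth_rewrite 1 [h23', h32']; rfl
    rw [← mul_assoc] at this
    have h2' : s1 * s1 * s2 = 1 * s2 := by rw [one_mul]; exact this.symm
    rw [pow_two]; exact mul_right_cancel h2'
  have hs1one : s1 = 1 := by
    have hd2 : orderOf s1 ∣ 2 := orderOf_dvd_of_pow_eq_one hsq
    have hdp : orderOf s1 ∣ p := by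
      have h' : orderOf (⟨s1, hs1⟩ : E1) ∣ Nat.card E1 := orderOf_dvd_natCard _
      rw [h1] at h'
      rwa [Subgroup.orderOf_mk] at h'
    have hp2 : ¬ (2 ∣ p) := by
      intro h
      rcases (Nat.Prime.eq_one_or_self_of_dvd hp 2 h) with h' | h' <;> omega
    rcases (Nat.dvd_prime Nat.prime_two).mp hd2 with h | h
    · exact orderOf_eq_one_iff.mp h
    · rw [h] at hdp; exact absurd hdp hp2
  have hs23 : s2 = s3 := by
    rw [hs1one, one_mul] at h23'; exact h23'
  have hs2one : s2 = 1 := by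
    have : s2 ∈ E2 ⊓ E3 := ⟨hs2, hs23 ▸ hs3⟩
    rwa [h23, Subgroup.mem_bot] at this
  exact ⟨hs1one, hs2one, hs23 ▸ hs2one⟩
end

section
/- Let H be a group of order 4p² (p ≥ 5 prime) whose Sylow p-subgroup Q is isomorphic to C_p × C_p and with H/Q ≅ C₂ × C₂. If H contains at most 3p elements of order 2, then H ≅ C_{2p} × C_{2p} or H ≅ C_{2p} × D_{2p}. -/
set_option maxHeartbeats 1000000 in
theorem stmt9 {H : Type*} [Group H] [Finite H] (p : ℕ) (hp : p.Prime) (hp5 : 5 ≤ p)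
    (hcard : Nat.card H = 4 * p ^ 2)
    (Q : Sylow p H) [ (Q : Subgroup H).Normal ]
    (hQ : Nonempty ((Q : Subgroup H) ≃* Multiplicative (ZMod p × ZMod p)))
    (hHQ : Nonempty ((H ⧸ (Q : Subgroup H)) ≃* Multiplicative (ZMod 2 × ZMod 2)))
    (hinv : Nat.card {h : H | orderOf h = 2} ≤ 3 * p) :
    Nonempty (H ≃* Multiplicative (ZMod (2 * p) × ZMod (2 * p))) ∨
    Nonempty (H ≃* Multiplicative (ZMod (2 * p)) × DihedralGroup p) := by
  classical
  obtain ⟨e⟩ := hQ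
  obtain ⟨π⟩ := hHQ
  haveI : Fact p.Prime := ⟨hp⟩
  have hp0 : p ≠ 0 := hp.ne_zero
  have hpne2 : p ≠ 2 := by omega
  have hpodd : Odd p := hp.odd_of_ne_two hpne2
  have hcop2p : Nat.Coprime 2 p := (Nat.coprime_primes Nat.prime_two hp).mpr (Ne.symm hpne2)
  set Qs : Subgroup H := (Q : Subgroup H) with hQsdef
  have hQn : Qs.Normal := ‹(Q : Subgroup H).Normal›
  -- cardinalities
  have hcardQ : Nat.card Qs = p ^ 2 := by
    rw [Nat.card_congr (e.toEquiv.trans Multiplicative.ofAdd.symm), Nat.card_prod,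
      Nat.card_zmod]; ring
  have hcardquot : Nat.card (H ⧸ Qs) = 4 := by
    rw [Nat.card_congr (π.toEquiv.trans Multiplicative.ofAdd.symm), Nat.card_prod,
      Nat.card_zmod]
  have hindex : Qs.index = 4 := hcardquot
  -- commutativity and exponent of Q
  have hQc : ∀ x y : Qs, x * y = y * x := by
    intro x y
    apply e.injective
    rw [map_mul, map_mul, mul_comm]
  have hQcH : ∀ x ∈ Qs, ∀ y ∈ Qs, x * y = y * x := by
    intro x hx y hy
    exact congrArg Subtype.val (hQc ⟨x, hx⟩ ⟨y, hy⟩)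
  have hMp : ∀ m : Multiplicative (ZMod p × ZMod p), m ^ p = 1 := by
    intro m
    have h0 : (p • m.toAdd) = 0 := by
      obtain ⟨x, y⟩ := Multiplicative.toAdd m
      simp [Prod.ext_iff, nsmul_eq_mul]
    rw [← toAdd_eq_zero, toAdd_pow, h0]
  have hQsP : ∀ q : Qs, q ^ p = 1 := by
    intro q
    apply e.injective
    rw [map_pow, map_one, hMp]
  have hQpowH : ∀ q ∈ Qs, q ^ p = 1 := by
    intro q hq
    have := hQsP ⟨q, hq⟩
    exact congrArg Subtype.val this
  -- Schur-Zassenhaus complement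
  have hcoprime : Nat.Coprime (Nat.card Qs) Qs.index := by
    rw [hcardQ, hindex]
    have : (4 : ℕ) = 2 ^ 2 := rfl
    rw [this]
    exact Nat.Coprime.pow 2 2 hcop2p.symm
  obtain ⟨K, hK⟩ := Subgroup.exists_right_complement'_of_coprime hcoprime
  have hcardK : Nat.card K = 4 := by
    have hmul := hK.card_mul
    rw [hcardQ, hcard] at hmul
    exact Nat.eq_of_mul_eq_mul_left (show 0 < p ^ 2 by positivity)
      (show p ^ 2 * Nat.card K = p ^ 2 * 4 by rw [hmul]; ring)
  have hQKdisj : ∀ x : H, x ∈ Qs → x ∈ K → x = 1 := by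
    intro x hx hk
    exact Subgroup.disjoint_def.mp hK.disjoint hx hk
  -- K ≅ H / Qs ≅ C2 × C2
  have hsurj : Function.Bijective ((QuotientGroup.mk' Qs).comp K.subtype) := by
    rw [Nat.bijective_iff_injective_and_card]
    constructor
    · rw [← MonoidHom.ker_eq_bot_iff, Subgroup.eq_bot_iff_forall]
      intro x hx
      rw [MonoidHom.mem_ker, MonoidHom.comp_apply, QuotientGroup.mk'_apply,
        QuotientGroup.eq_one_iff] at hx
      exact Subtype.ext (hQKdisj x.1 hx x.2)
    · rw [hcardK, hcardquot]
  let ι2 : K ≃* Multiplicative (ZMod 2 × ZMod 2) :=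
    (MulEquiv.ofBijective _ hsurj).trans π
  have hM4 : ∀ m : Multiplicative (ZMod 2 × ZMod 2), m * m = 1 := by decide
  have hKsq : ∀ k ∈ K, k * k = 1 := by
    intro k hk
    have : (⟨k, hk⟩ : K) * ⟨k, hk⟩ = 1 := by
      apply ι2.injective
      rw [map_mul, map_one, hM4]
    exact congrArg Subtype.val this
  have hKcommH : ∀ x ∈ K, ∀ y ∈ K, x * y = y * x := by
    intro x hx y hy
    have : (⟨x, hx⟩ : K) * ⟨y, hy⟩ = ⟨y, hy⟩ * ⟨x, hx⟩ := by
      apply ι2.injective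
      rw [map_mul, map_mul, mul_comm]
    exact congrArg Subtype.val this
  -- decomposition of H
  have hsplit : ∀ h : H, ∃ q ∈ Qs, ∃ k ∈ K, h = q * k := by
    intro h
    obtain ⟨⟨⟨q, hq⟩, ⟨k, hk⟩⟩, h1, -⟩ := hK.existsUnique h
    exact ⟨q, hq, k, hk, h1.symm⟩
  -- no element of K∖1 inverts all of Q
  have hnoinv : ∀ k ∈ K, k ≠ 1 → ¬ (∀ q ∈ Qs, k * q * k⁻¹ = q⁻¹) := by
    intro k hkK hk1 hall
    haveI : Fact (Nat.Prime 2) := ⟨Nat.prime_two⟩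
    have hk2 : k * k = 1 := hKsq k hkK
    have f : ∀ q : Qs, orderOf ((q : H) * k) = 2 := by
      intro q
      have hq' : k * (q : H) * k⁻¹ = ((q : H))⁻¹ := hall q q.2
      have hsq : ((q : H) * k) ^ 2 = 1 := by
        rw [pow_two]
        calc ((q:H)*k)*((q:H)*k) = (q:H) * (k * (q:H) * k⁻¹) * (k * k) := by group
          _ = (q:H) * ((q:H))⁻¹ * (k * k) := by rw [hq']
          _ = 1 := by rw [hk2]; group
      have hne : (q : H) * k ≠ 1 := by
        intro hqk
        apply hk1
        have hkq : k = ((q:H))⁻¹ := eq_inv_of_mul_eq_one_right hqk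
        exact hQKdisj k (hkq ▸ Qs.inv_mem q.2) hkK
      exact orderOf_eq_prime hsq hne
    have hinj : Function.Injective (fun q : Qs => (⟨(q : H) * k, f q⟩ : {h : H | orderOf h = 2})) := by
      intro q q' hqq'
      have := congrArg Subtype.val hqq'
      simp only [mul_left_inj] at this
      exact Subtype.ext this
    have hle : Nat.card Qs ≤ Nat.card {h : H | orderOf h = 2} :=
      Nat.card_le_card_of_injective _ hinj
    rw [hcardQ] at hle
    nlinarith [hle.trans hinv]
  -- case split
  by_cases hcomm : ∀ x y : H, x * y = y * x
  · -- abelian case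
    left
    let ψf : Multiplicative (ZMod p × ZMod p) × Multiplicative (ZMod 2 × ZMod 2) → H :=
      fun x => (e.symm x.1 : H) * (ι2.symm x.2 : H)
    have hψmul : ∀ x y, ψf (x * y) = ψf x * ψf y := by
      intro x y
      simp only [ψf, Prod.fst_mul, Prod.snd_mul, map_mul]
      push_cast
      rw [mul_assoc, mul_assoc]
      congr 1
      rw [← mul_assoc, ← mul_assoc, hcomm (ι2.symm x.2 : H) (e.symm y.1 : H)]
    let ψ : Multiplicative (ZMod p × ZMod p) × Multiplicative (ZMod 2 × ZMod 2) →* H :=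
      MonoidHom.mk' ψf hψmul
    have hbij : Function.Bijective ψ := by
      rw [Nat.bijective_iff_injective_and_card]
      constructor
      · rw [injective_iff_map_eq_one]
        intro x hx
        have h1 : ((e.symm x.1 : H)) = ((ι2.symm x.2 : H))⁻¹ := by
          rw [eq_inv_iff_mul_eq_one]; exact hx
        have h2 : ((ι2.symm x.2 : H))⁻¹ ∈ K := K.inv_mem (ι2.symm x.2).2
        have h3 : (e.symm x.1 : H) = 1 := hQKdisj _ (e.symm x.1).2 (h1 ▸ h2)
        have h4 : e.symm x.1 = 1 := Subtype.ext h3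
        have h5 : (ι2.symm x.2 : H) = 1 := by
          rw [h1] at h3
          rw [← inv_inv ((ι2.symm x.2 : H)), h3, inv_one]
        have hx1 : x.1 = 1 := by
          have := congrArg e h4
          rwa [MulEquiv.apply_symm_apply, map_one] at this
        have hx2 : x.2 = 1 := by
          have := congrArg ι2 (Subtype.ext h5 : ι2.symm x.2 = 1)
          rwa [MulEquiv.apply_symm_apply, map_one] at this
        exact Prod.ext hx1 hx2
      · rw [Nat.card_prod, hcard,
          Nat.card_congr (Multiplicative.ofAdd.symm : Multiplicative (ZMod p × ZMod p) ≃ _),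
          Nat.card_congr (Multiplicative.ofAdd.symm : Multiplicative (ZMod 2 × ZMod 2) ≃ _),
          Nat.card_prod, Nat.card_prod, Nat.card_zmod, Nat.card_zmod]
        ring
    -- assemble the final equivalence
    let c : ZMod (2 * p) ≃+ ZMod 2 × ZMod p := (ZMod.chineseRemainder hcop2p).toAddEquiv
    let A : ZMod (2 * p) × ZMod (2 * p) ≃+ (ZMod p × ZMod p) × (ZMod 2 × ZMod 2) :=
      (c.prodCongr c).trans ((AddEquiv.prodProdProdComm (ZMod 2) (ZMod p) (ZMod 2) (ZMod p)).trans
        AddEquiv.prodComm)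
    let B : Multiplicative (ZMod (2 * p) × ZMod (2 * p)) ≃*
        Multiplicative (ZMod p × ZMod p) × Multiplicative (ZMod 2 × ZMod 2) :=
      (AddEquiv.toMultiplicative A).trans (MulEquiv.prodMultiplicative (ZMod p × ZMod p) (ZMod 2 × ZMod 2))
    exact ⟨(B.trans (MulEquiv.ofBijective ψ hbij)).symm⟩
  · -- nonabelian case
    right
    haveI : Fact (Nat.Prime 2) := ⟨Nat.prime_two⟩
    haveI : NeZero p := ⟨hp0⟩
    haveI : NeZero (2 * p) := ⟨by omega⟩
    -- find a noncentralizing element of K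
    have hex : ∃ k ∈ K, ∃ q ∈ Qs, k * q * k⁻¹ ≠ q := by
      by_contra hno
      push_neg at hno
      apply hcomm
      intro x y
      obtain ⟨qx, hqx, kx, hkx, rfl⟩ := hsplit x
      obtain ⟨qy, hqy, ky, hky, rfl⟩ := hsplit y
      have hc : ∀ k ∈ K, ∀ q ∈ Qs, k * q = q * k := by
        intro k hk q hq
        have h1 := hno k hk q hq
        calc k * q = (k * q * k⁻¹) * k := by group
          _ = q * k := by rw [h1]
      calc qx * kx * (qy * ky) = qx * (kx * qy) * ky := by group
        _ = qx * qy * (kx * ky) := by rw [hc kx hkx qy hqy]; group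
        _ = qy * qx * (ky * kx) := by rw [hQcH qx hqx qy hqy, hKcommH kx hkx ky hky]
        _ = qy * (qx * ky) * kx := by group
        _ = qy * (ky * qx) * kx := by rw [← hc ky hky qx hqx]
        _ = qy * ky * (qx * kx) := by group
    obtain ⟨a, haK, q₀, hq₀, hq₀ne⟩ := hex
    have ha1 : a ≠ 1 := by rintro rfl; simp at hq₀ne
    have ha2 : a * a = 1 := hKsq a haK
    have hainv : a⁻¹ = a := inv_eq_of_mul_eq_one_right ha2
    -- the conjugation automorphism of Q
    have hτmem : ∀ q : Qs, a * (q : H) * a⁻¹ ∈ Qs := fun q => hQn.conj_mem _ q.2 a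
    let τ : Qs →* Qs := MonoidHom.mk' (fun q => ⟨a * (q : H) * a⁻¹, hτmem q⟩) (by
      intro x y
      ext
      push_cast
      group)
    have hττ : ∀ q : Qs, τ (τ q) = q := by
      intro q
      ext
      show a * (a * (q : H) * a⁻¹) * a⁻¹ = (q : H)
      calc a * (a * (q : H) * a⁻¹) * a⁻¹ = (a * a) * (q : H) * (a * a)⁻¹ := by group
        _ = (q : H) := by rw [ha2]; group
    letI : CommGroup Qs := { (inferInstance : Group Qs) with mul_comm := hQc }
    -- the fixed and inverted subgroups
    let Ff : Subgroup Qs :=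
      { carrier := {q | τ q = q}
        one_mem' := by simp
        mul_mem' := by
          intro x y hx hy
          simp only [Set.mem_setOf_eq] at *
          rw [map_mul, hx, hy]
        inv_mem' := by
          intro x hx
          simp only [Set.mem_setOf_eq] at *
          rw [map_inv, hx] }
    let Nn : Subgroup Qs :=
      { carrier := {q | τ q = q⁻¹}
        one_mem' := by simp
        mul_mem' := by
          intro x y hx hy
          simp only [Set.mem_setOf_eq] at *
          rw [map_mul, hx, hy, mul_inv]
        inv_mem' := by
          intro x hx
          simp only [Set.mem_setOf_eq] at *
          rw [map_inv, hx] }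
    have hmemF : ∀ q : Qs, q ∈ Ff ↔ τ q = q := fun q => Iff.rfl
    have hmemN : ∀ q : Qs, q ∈ Nn ↔ τ q = q⁻¹ := fun q => Iff.rfl
    obtain ⟨m, hm⟩ : ∃ m, 2 * m = p + 1 := by
      obtain ⟨k, hk⟩ := hpodd
      exact ⟨k + 1, by omega⟩
    -- decomposition Q = F * N
    have hdec : ∀ q : Qs, ∃ f ∈ Ff, ∃ n ∈ Nn, q = f * n := by
      intro q
      refine ⟨(q * τ q) ^ m, ?_, (q * (τ q)⁻¹) ^ m, ?_, ?_⟩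
      · rw [hmemF, map_pow, map_mul, hττ, mul_comm (τ q) q]
      · rw [hmemN, map_pow, map_mul, map_inv, hττ, ← inv_pow, mul_inv, inv_inv,
          mul_comm (τ q) q⁻¹]
      · rw [← mul_pow, mul_mul_mul_comm, mul_inv_cancel, mul_one, ← pow_two, ← pow_mul, hm,
          pow_succ, hQsP, one_mul]
    have hFNdisj : ∀ x : Qs, x ∈ Ff → x ∈ Nn → x = 1 := by
      intro x hx1 hx2
      rw [hmemF] at hx1
      rw [hmemN] at hx2
      have hxe : x = x⁻¹ := by
        conv_lhs => rw [← hx1]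
        exact hx2
      have hxx : x * x = 1 := by nth_rewrite 1 [hxe]; exact inv_mul_cancel x
      obtain ⟨k, hk⟩ := hpodd
      have h1 : (x * x) ^ k * x = 1 := by
        rw [← pow_two, ← pow_mul, ← pow_succ, show 2 * k + 1 = p by omega, hQsP]
      rwa [hxx, one_pow, one_mul] at h1
    -- a generator of N
    have hτq₀ : τ ⟨q₀, hq₀⟩ ≠ ⟨q₀, hq₀⟩ := by
      intro hcon
      exact hq₀ne (congrArg Subtype.val hcon)
    obtain ⟨f', hf', n₀, hn₀, hq0dec⟩ := hdec ⟨q₀, hq₀⟩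
    have hn₀1 : n₀ ≠ 1 := by
      rintro rfl
      apply hτq₀
      rw [hq0dec, mul_one]
      exact (hmemF f').mp hf'
    -- a nontrivial fixed element
    obtain ⟨f₀, hf₀, hf₀1⟩ : ∃ f : Qs, f ∈ Ff ∧ f ≠ 1 := by
      by_contra hno
      push_neg at hno
      apply hnoinv a haK ha1
      intro q hq
      obtain ⟨f, hf, n', hn', hdq⟩ := hdec ⟨q, hq⟩
      rw [hno f hf, one_mul] at hdq
      have : τ ⟨q, hq⟩ = (⟨q, hq⟩ : Qs)⁻¹ := by rw [hdq]; exact (hmemN n').mp hn'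
      have := congrArg Subtype.val this
      exact this
    -- orders
    have hordn₀ : orderOf n₀ = p := orderOf_eq_prime (hQsP n₀) hn₀1
    have hordf₀ : orderOf f₀ = p := orderOf_eq_prime (hQsP f₀) hf₀1
    -- cardinalities of F and N
    have hcards : ∀ C : Subgroup Qs, C ≠ ⊤ → (∃ x ∈ C, x ≠ 1) → Nat.card C = p := by
      intro C hCtop ⟨x, hxC, hx1⟩
      have hdvd : Nat.card C ∣ p ^ 2 := hcardQ ▸ C.card_subgroup_dvd_card
      obtain ⟨i, hi2, hieq⟩ := (Nat.dvd_prime_pow hp).mp hdvd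
      interval_cases i
      · exfalso
        apply hx1
        have : C = ⊥ := Subgroup.card_eq_one.mp (by rw [hieq]; rfl)
        rw [this] at hxC
        exact hxC
      · rwa [pow_one] at hieq
      · exfalso
        apply hCtop
        apply Subgroup.eq_top_of_card_eq
        rw [hieq, hcardQ]
    have hNtop : Nn ≠ ⊤ := by
      intro htop
      apply hnoinv a haK ha1
      intro q hq
      have : τ ⟨q, hq⟩ = (⟨q, hq⟩ : Qs)⁻¹ := (hmemN _).mp (htop ▸ Subgroup.mem_top _)
      exact congrArg Subtype.val this
    have hFtop : Ff ≠ ⊤ := by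
      intro htop
      apply hτq₀
      exact (hmemF _).mp (htop ▸ Subgroup.mem_top _)
    have hcardN : Nat.card Nn = p := hcards Nn hNtop ⟨n₀, hn₀, hn₀1⟩
    have hcardF : Nat.card Ff = p := hcards Ff hFtop ⟨f₀, hf₀, hf₀1⟩
    have hNz : Subgroup.zpowers n₀ = Nn :=
      Subgroup.eq_of_le_of_card_ge (Subgroup.zpowers_le.mpr hn₀)
        (by rw [hcardN, Nat.card_zpowers, hordn₀])
    have hFz : Subgroup.zpowers f₀ = Ff :=
      Subgroup.eq_of_le_of_card_ge (Subgroup.zpowers_le.mpr hf₀)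
        (by rw [hcardF, Nat.card_zpowers, hordf₀])
    -- H-level elements and facts
    set fH : H := (f₀ : H) with hfHdef
    set nH : H := (n₀ : H) with hnHdef
    have hfQ : fH ∈ Qs := f₀.2
    have hnQ : nH ∈ Qs := n₀.2
    have hordfH : orderOf fH = p := by
      rw [← hordf₀]
      exact orderOf_injective Qs.subtype Subtype.coe_injective f₀
    have hordnH : orderOf nH = p := by
      rw [← hordn₀]
      exact orderOf_injective Qs.subtype Subtype.coe_injective n₀
    have hconj_af : a * fH * a⁻¹ = fH := congrArg Subtype.val ((hmemF f₀).mp hf₀)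
    have hconj_an : a * nH * a⁻¹ = nH⁻¹ := congrArg Subtype.val ((hmemN n₀).mp hn₀)
    have hconj_af' : a * fH * a = fH := by
      nth_rewrite 2 [← hainv]
      exact hconj_af
    have hconj_an' : a * nH * a = nH⁻¹ := by
      nth_rewrite 2 [← hainv]
      exact hconj_an
    have hFNH : ∀ q ∈ Qs, ∃ i j : ℤ, q = fH ^ i * nH ^ j := by
      intro q hq
      obtain ⟨f, hf, n, hn, hd⟩ := hdec ⟨q, hq⟩
      rw [← hFz] at hf
      rw [← hNz] at hn
      obtain ⟨i, hi⟩ := Subgroup.mem_zpowers_iff.mp hf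
      obtain ⟨j, hj⟩ := Subgroup.mem_zpowers_iff.mp hn
      refine ⟨i, j, ?_⟩
      have := congrArg Subtype.val hd
      rw [← hi, ← hj] at this
      push_cast at this
      exact this
    have hdisjH : ∀ i j : ℤ, fH ^ i * nH ^ j = 1 → fH ^ i = 1 ∧ nH ^ j = 1 := by
      intro i j hij
      have h1 : (f₀ ^ i : Qs) * (n₀ ^ j) = 1 := by
        ext
        push_cast
        exact hij
      have h2 : f₀ ^ i = (n₀ ^ j)⁻¹ := eq_inv_of_mul_eq_one_left h1
      have h3 : f₀ ^ i ∈ Ff := Ff.zpow_mem hf₀ i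
      have h4 : f₀ ^ i ∈ Nn := h2 ▸ Nn.inv_mem (Nn.zpow_mem hn₀ j)
      have h5 : f₀ ^ i = 1 := hFNdisj _ h3 h4
      have h6 : (n₀ : Qs) ^ j = 1 := by
        rw [h5, one_mul] at h1
        exact h1
      constructor
      · have := congrArg Subtype.val h5
        push_cast at this
        exact this
      · have := congrArg Subtype.val h6
        push_cast at this
        exact this
    -- the ±1 conjugation lemma
    have key : ∀ c x : H, c * c = 1 → orderOf x = p → c * x * c⁻¹ ∈ Subgroup.zpowers x →
        c * x * c⁻¹ = x ∨ c * x * c⁻¹ = x⁻¹ := by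
      intro c x hc2 hxp hmem
      obtain ⟨j, hj⟩ := Subgroup.mem_zpowers_iff.mp hmem
      have hconj2 : c * (c * x * c⁻¹) * c⁻¹ = x := by
        calc c * (c * x * c⁻¹) * c⁻¹ = (c * c) * x * (c * c)⁻¹ := by group
          _ = x := by rw [hc2]; group
      have hxjj : x ^ (j * j) = x ^ (1 : ℤ) := by
        calc x ^ (j * j) = (x ^ j) ^ j := by rw [← zpow_mul, mul_comm]
          _ = (c * x * c⁻¹) ^ j := by rw [hj]
          _ = c * x ^ j * c⁻¹ := conj_zpow
          _ = c * (c * x * c⁻¹) * c⁻¹ := by rw [hj]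
          _ = x := hconj2
          _ = x ^ (1 : ℤ) := (zpow_one x).symm
      have hmod : j * j ≡ 1 [ZMOD p] := by
        have h := zpow_eq_zpow_iff_modEq.mp hxjj
        rwa [hxp] at h
      have hz : ((j : ZMod p)) * (j : ZMod p) = 1 := by
        have h := (ZMod.intCast_eq_intCast_iff _ _ _).mpr hmod
        push_cast at h
        exact h
      rcases mul_self_eq_one_iff.mp hz with h1 | h1
      · left
        rw [← hj]
        have hjm : j ≡ 1 [ZMOD p] := by
          rw [← ZMod.intCast_eq_intCast_iff]
          push_cast
          exact h1
        calc x ^ j = x ^ (1 : ℤ) := zpow_eq_zpow_iff_modEq.mpr (by rwa [hxp])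
          _ = x := zpow_one x
      · right
        rw [← hj]
        have hjm : j ≡ -1 [ZMOD p] := by
          rw [← ZMod.intCast_eq_intCast_iff]
          push_cast
          exact h1
        calc x ^ j = x ^ (-1 : ℤ) := zpow_eq_zpow_iff_modEq.mpr (by rwa [hxp])
          _ = x⁻¹ := zpow_neg_one x
    -- pick b in K different from 1 and a
    obtain ⟨b, hbK, hb1, hba⟩ : ∃ b, b ∈ K ∧ b ≠ 1 ∧ b ≠ a := by
      by_contra hno
      push_neg at hno
      have hsub : (K : Set H) ⊆ {1, a} := by
        intro x hx
        by_cases hx1 : x = 1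
        · exact Or.inl hx1
        · exact Or.inr (hno x hx hx1)
      have hle : Nat.card K ≤ 2 := by
        rw [← SetLike.coe_sort_coe, Nat.card_coe_set_eq]
        calc ((K : Set H)).ncard ≤ ({1, a} : Set H).ncard :=
              Set.ncard_le_ncard hsub (Set.toFinite _)
          _ ≤ 2 := by
              apply le_trans (Set.ncard_insert_le _ _)
              simp
      omega
    have hb2 : b * b = 1 := hKsq b hbK
    have hbinv : b⁻¹ = b := inv_eq_of_mul_eq_one_right hb2
    have hab : a * b = b * a := hKcommH a haK b hbK
    -- b stabilizes N and F
    have hbnmem : b * nH * b⁻¹ ∈ Subgroup.zpowers nH := by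
      have hQm : b * nH * b⁻¹ ∈ Qs := hQn.conj_mem _ hnQ b
      have hNm : (⟨b * nH * b⁻¹, hQm⟩ : Qs) ∈ Nn := by
        rw [hmemN]
        ext
        show a * (b * nH * b⁻¹) * a⁻¹ = (b * nH * b⁻¹)⁻¹
        rw [hbinv, hainv]
        calc a * (b * nH * b) * a = (a * b) * nH * (b * a) := by group
          _ = (b * a) * nH * (a * b) := by rw [hab]
          _ = b * (a * nH * a) * b := by group
          _ = b * nH⁻¹ * b := by rw [hconj_an']
          _ = (b * nH * b)⁻¹ := by rw [mul_inv_rev, mul_inv_rev, hbinv]; group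
      rw [← hNz] at hNm
      obtain ⟨j, hj⟩ := Subgroup.mem_zpowers_iff.mp hNm
      have := congrArg Subtype.val hj
      push_cast at this
      exact Subgroup.mem_zpowers_iff.mpr ⟨j, this⟩
    have hbfmem : b * fH * b⁻¹ ∈ Subgroup.zpowers fH := by
      have hQm : b * fH * b⁻¹ ∈ Qs := hQn.conj_mem _ hfQ b
      have hFm : (⟨b * fH * b⁻¹, hQm⟩ : Qs) ∈ Ff := by
        rw [hmemF]
        ext
        show a * (b * fH * b⁻¹) * a⁻¹ = b * fH * b⁻¹
        rw [hbinv, hainv]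
        calc a * (b * fH * b) * a = (a * b) * fH * (b * a) := by group
          _ = (b * a) * fH * (a * b) := by rw [hab]
          _ = b * (a * fH * a) * b := by group
          _ = b * fH * b := by rw [hconj_af']
      rw [← hFz] at hFm
      obtain ⟨j, hj⟩ := Subgroup.mem_zpowers_iff.mp hFm
      have := congrArg Subtype.val hj
      push_cast at this
      exact Subgroup.mem_zpowers_iff.mpr ⟨j, this⟩
    have hbn := key b nH hb2 hordnH hbnmem
    have hbf := key b fH hb2 hordfH hbfmem
    -- commuting inside Q at H-level
    have hfncomm : ∀ i j : ℤ, fH ^ i * nH ^ j = nH ^ j * fH ^ i := fun i j =>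
      hQcH _ (Qs.zpow_mem hfQ i) _ (Qs.zpow_mem hnQ j)
    -- helper : an element of K∖1 inverting both generators gives a contradiction
    have hinvall : ∀ c, c ∈ K → c ≠ 1 → c * fH * c⁻¹ = fH⁻¹ → c * nH * c⁻¹ = nH⁻¹ → False := by
      intro c hcK hc1 hcf hcn
      apply hnoinv c hcK hc1
      intro q hq
      obtain ⟨i, j, rfl⟩ := hFNH q hq
      have h1 : c * fH ^ i * c⁻¹ = (fH ^ i)⁻¹ := by
        rw [← conj_zpow, hcf, inv_zpow]
      have h2 : c * nH ^ j * c⁻¹ = (nH ^ j)⁻¹ := by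
        rw [← conj_zpow, hcn, inv_zpow]
      calc c * (fH ^ i * nH ^ j) * c⁻¹ = (c * fH ^ i * c⁻¹) * (c * nH ^ j * c⁻¹) := by group
        _ = (fH ^ i)⁻¹ * (nH ^ j)⁻¹ := by rw [h1, h2]
        _ = ((fH ^ i) * (nH ^ j))⁻¹ := by
            rw [mul_inv_rev]
            simp only [← zpow_neg]
            exact hfncomm (-i) (-j)
    -- helper : fixing both generators means centralizing Q
    have hcenall : ∀ c : H, c * fH * c⁻¹ = fH → c * nH * c⁻¹ = nH → ∀ q ∈ Qs, c * q = q * c := by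
      intro c hcf hcn q hq
      obtain ⟨i, j, rfl⟩ := hFNH q hq
      have h1 : c * fH ^ i * c⁻¹ = fH ^ i := by rw [← conj_zpow, hcf]
      have h2 : c * nH ^ j * c⁻¹ = nH ^ j := by rw [← conj_zpow, hcn]
      have h3 : c * (fH ^ i * nH ^ j) * c⁻¹ = fH ^ i * nH ^ j := by
        calc c * (fH ^ i * nH ^ j) * c⁻¹ = (c * fH ^ i * c⁻¹) * (c * nH ^ j * c⁻¹) := by group
          _ = fH ^ i * nH ^ j := by rw [h1, h2]
      calc c * (fH ^ i * nH ^ j) = (c * (fH ^ i * nH ^ j) * c⁻¹) * c := by group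
        _ = (fH ^ i * nH ^ j) * c := by rw [h3]
    -- produce the central element u
    have hab1 : a * b ≠ 1 := by
      intro h
      exact hba ((inv_eq_of_mul_eq_one_right h).symm.trans hainv)
    have habK : a * b ∈ K := mul_mem haK hbK
    obtain ⟨u, huK, hu1, hune_a, hufix_f, hufix_n⟩ :
        ∃ u, u ∈ K ∧ u ≠ 1 ∧ u ≠ a ∧ u * fH * u⁻¹ = fH ∧ u * nH * u⁻¹ = nH := by
      rcases hbn with hbn | hbn <;> rcases hbf with hbf | hbf
      · exact ⟨b, hbK, hb1, hba, hbf, hbn⟩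
      · -- b fixes n, inverts f : then a*b inverts both
        exfalso
        apply hinvall (a * b) habK hab1
        · rw [mul_inv_rev]
          calc a * b * fH * (b⁻¹ * a⁻¹) = a * (b * fH * b⁻¹) * a⁻¹ := by group
            _ = a * fH⁻¹ * a⁻¹ := by rw [hbf]
            _ = (a * fH * a⁻¹)⁻¹ := by group
            _ = fH⁻¹ := by rw [hconj_af]
        · rw [mul_inv_rev]
          calc a * b * nH * (b⁻¹ * a⁻¹) = a * (b * nH * b⁻¹) * a⁻¹ := by group
            _ = a * nH * a⁻¹ := by rw [hbn]
            _ = nH⁻¹ := hconj_an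
      · -- b inverts n, fixes f : then a*b fixes both
        refine ⟨a * b, habK, hab1, ?_, ?_, ?_⟩
        · intro h
          exact hb1 (mul_left_cancel (h.trans (mul_one a).symm))
        · rw [mul_inv_rev]
          calc a * b * fH * (b⁻¹ * a⁻¹) = a * (b * fH * b⁻¹) * a⁻¹ := by group
            _ = a * fH * a⁻¹ := by rw [hbf]
            _ = fH := hconj_af
        · rw [mul_inv_rev]
          calc a * b * nH * (b⁻¹ * a⁻¹) = a * (b * nH * b⁻¹) * a⁻¹ := by group
            _ = a * nH⁻¹ * a⁻¹ := by rw [hbn]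
            _ = (a * nH * a⁻¹)⁻¹ := by group
            _ = nH⁻¹⁻¹ := by rw [hconj_an]
            _ = nH := inv_inv nH
      · -- b inverts both
        exact absurd hbn (by intro h; exact hinvall b hbK hb1 hbf h)
    have hu2 : u * u = 1 := hKsq u huK
    have huinv : u⁻¹ = u := inv_eq_of_mul_eq_one_right hu2
    have hordu : orderOf u = 2 := orderOf_eq_prime (by rw [pow_two]; exact hu2) hu1
    -- u is central in H
    have hucenQ : ∀ q ∈ Qs, u * q = q * u := hcenall u hufix_f hufix_n
    have hucen : ∀ x : H, u * x = x * u := by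
      intro x
      obtain ⟨q, hq, k, hk, rfl⟩ := hsplit x
      calc u * (q * k) = (u * q) * k := by group
        _ = q * (u * k) := by rw [hucenQ q hq]; group
        _ = q * (k * u) := by rw [hKcommH u huK k hk]
        _ = (q * k) * u := by group
    -- enumeration of K
    have hua1 : u * a ≠ 1 := by
      intro h
      exact hune_a (huinv.symm.trans (inv_eq_of_mul_eq_one_right h))
    have hua_u : u * a ≠ u := fun h => ha1 (mul_left_cancel (h.trans (mul_one u).symm))
    have hua_a : u * a ≠ a := fun h => hu1 (mul_right_cancel (h.trans (one_mul a).symm))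
    have hu1' : ¬ (u = 1) := hu1
    have ha1' : ¬ (a = 1) := ha1
    have hcore : ∀ i j i' j' : ℕ, i < 2 → j < 2 → i' < 2 → j' < 2 →
        u ^ i * a ^ j = u ^ i' * a ^ j' → i = i' ∧ j = j' := by
      intro i j i' j' hi hj hi' hj' heq
      interval_cases i <;> interval_cases j <;> interval_cases i' <;> interval_cases j' <;>
        simp only [pow_zero, pow_one, one_mul, mul_one] at heq <;>
        first
          | exact ⟨rfl, rfl⟩
          | exact absurd heq (by assumption)
          | exact absurd heq.symm (by assumption)
    have hKlist : ∀ k ∈ K, ∃ i j : ℕ, k = u ^ i * a ^ j := by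
      have hg : Function.Bijective (fun x : ZMod 2 × ZMod 2 =>
          (⟨u ^ x.1.val * a ^ x.2.val, mul_mem (pow_mem huK _) (pow_mem haK _)⟩ : K)) := by
        rw [Nat.bijective_iff_injective_and_card]
        constructor
        · intro x y hxy
          have h1 := congrArg Subtype.val hxy
          obtain ⟨h2, h3⟩ := hcore _ _ _ _ (ZMod.val_lt x.1) (ZMod.val_lt x.2)
            (ZMod.val_lt y.1) (ZMod.val_lt y.2) h1
          exact Prod.ext (ZMod.val_injective 2 h2) (ZMod.val_injective 2 h3)
        · rw [Nat.card_prod, Nat.card_zmod, hcardK]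
      intro k hk
      obtain ⟨⟨i, j⟩, hij⟩ := hg.2 ⟨k, hk⟩
      exact ⟨i.val, j.val, (congrArg Subtype.val hij).symm⟩
    -- fH is central in H
    have hfa : fH * a = a * fH := by
      calc fH * a = (a * fH * a⁻¹) * a := by rw [hconj_af]
        _ = a * fH := by group
    have hfu : fH * u = u * fH := by
      calc fH * u = (u * fH * u⁻¹) * u := by rw [hufix_f]
        _ = u * fH := by group
    have hfcen : ∀ x : H, fH * x = x * fH := by
      intro x
      obtain ⟨q, hq, k, hk, rfl⟩ := hsplit x
      obtain ⟨i, j, rfl⟩ := hKlist k hk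
      have hCfk : Commute fH (u ^ i * a ^ j) :=
        ((Commute.pow_right (hfu : Commute fH u) i)).mul_right
          (Commute.pow_right (hfa : Commute fH a) j)
      calc fH * (q * (u ^ i * a ^ j)) = (fH * q) * (u ^ i * a ^ j) := by group
        _ = (q * fH) * (u ^ i * a ^ j) := by rw [hQcH fH hfQ q hq]
        _ = q * (fH * (u ^ i * a ^ j)) := by group
        _ = q * ((u ^ i * a ^ j) * fH) := by rw [hCfk]
        _ = (q * (u ^ i * a ^ j)) * fH := by group
    -- the central element z of order 2p
    set z : H := fH * u with hzdef
    have hCz : Commute fH u := hfu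
    have hzcen : ∀ x : H, z * x = x * z := by
      intro x
      calc (fH * u) * x = fH * (u * x) := by group
        _ = fH * (x * u) := by rw [hucen x]
        _ = (fH * x) * u := by group
        _ = (x * fH) * u := by rw [hfcen x]
        _ = x * (fH * u) := by group
    have hordz : orderOf z = 2 * p := by
      rw [hCz.orderOf_mul_eq_mul_orderOf_of_coprime (by rw [hordfH, hordu]; exact hcop2p.symm),
        hordfH, hordu]
      ring
    have hzpowc : ∀ (n : ℕ) (w : H), z ^ n * w = w * z ^ n :=
      fun n w => Commute.pow_left (hzcen w) n
    have hupowc : ∀ (n : ℕ) (w : H), u ^ n * w = w * u ^ n :=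
      fun n w => Commute.pow_left (hucen w) n
    -- the model homomorphism
    have hzpow : ∀ α β : ℕ, z ^ ((α + β) % (2 * p)) = z ^ α * z ^ β := by
      intro α β
      rw [← hordz, pow_mod_orderOf, pow_add]
    let ζf : Multiplicative (ZMod (2 * p)) → H := fun x => z ^ (Multiplicative.toAdd x).val
    have hζmul : ∀ x y, ζf (x * y) = ζf x * ζf y := by
      intro x y
      show z ^ (Multiplicative.toAdd (x * y)).val = _
      rw [toAdd_mul, ZMod.val_add]
      exact hzpow _ _
    let χf : ZMod p → H := fun i => nH ^ i.val
    have hχadd : ∀ i j : ZMod p, χf (i + j) = χf i * χf j := by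
      intro i j
      show nH ^ (i + j).val = nH ^ i.val * nH ^ j.val
      rw [ZMod.val_add, ← pow_add]
      conv_rhs => rw [← pow_mod_orderOf]
      rw [hordnH]
    have hχzero : χf 0 = 1 := by
      show nH ^ (0 : ZMod p).val = 1
      rw [ZMod.val_zero, pow_zero]
    have hχneg : ∀ i : ZMod p, χf (-i) = (χf i)⁻¹ := by
      intro i
      apply eq_inv_of_mul_eq_one_left
      rw [← hχadd, neg_add_cancel, hχzero]
    have hχQ : ∀ i : ZMod p, χf i ∈ Qs := fun i => pow_mem hnQ _
    have hconjχ : ∀ i : ZMod p, a * χf i * a⁻¹ = χf (-i) := by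
      intro i
      show a * nH ^ i.val * a⁻¹ = χf (-i)
      rw [← conj_pow, hconj_an, inv_pow, hχneg]
    have hswap : ∀ i : ZMod p, χf i * a = a * χf (-i) := by
      intro i
      have h := hconjχ (-i)
      rw [neg_neg] at h
      rw [← h]
      group
    let δf : DihedralGroup p → H := fun d =>
      match d with
      | DihedralGroup.r i => χf i
      | DihedralGroup.sr i => a * χf i
    have hδmul : ∀ d d' : DihedralGroup p, δf (d * d') = δf d * δf d' := by
      intro d d'
      cases d with
      | r i =>
        cases d' with
        | r j =>
          rw [DihedralGroup.r_mul_r]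
          exact hχadd i j
        | sr j =>
          rw [DihedralGroup.r_mul_sr]
          show a * χf (j - i) = χf i * (a * χf j)
          calc a * χf (j - i) = a * χf (-i + j) := by rw [neg_add_eq_sub]
            _ = a * (χf (-i) * χf j) := by rw [hχadd]
            _ = (a * χf (-i)) * χf j := by group
            _ = (χf i * a) * χf j := by rw [hswap]
            _ = χf i * (a * χf j) := by group
      | sr i =>
        cases d' with
        | r j =>
          rw [DihedralGroup.sr_mul_r]
          show a * χf (i + j) = (a * χf i) * χf j
          rw [hχadd]
          group
        | sr j =>
          rw [DihedralGroup.sr_mul_sr]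
          show χf (j - i) = (a * χf i) * (a * χf j)
          calc χf (j - i) = χf (-i + j) := by rw [neg_add_eq_sub]
            _ = χf (-i) * χf j := by rw [hχadd]
            _ = (a * a) * (χf (-i) * χf j) := by rw [ha2]; group
            _ = a * (a * χf (-i)) * χf j := by group
            _ = a * (χf i * a) * χf j := by rw [hswap]
            _ = (a * χf i) * (a * χf j) := by group
    let ψf : Multiplicative (ZMod (2 * p)) × DihedralGroup p → H :=
      fun x => ζf x.1 * δf x.2
    have hζcen : ∀ (x : Multiplicative (ZMod (2 * p))) (w : H), ζf x * w = w * ζf x :=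
      fun x w => hzpowc _ w
    let ψ : Multiplicative (ZMod (2 * p)) × DihedralGroup p →* H :=
      MonoidHom.mk' ψf (by
        intro x y
        show ζf (x.1 * y.1) * δf (x.2 * y.2) = (ζf x.1 * δf x.2) * (ζf y.1 * δf y.2)
        rw [hζmul, hδmul]
        calc ζf x.1 * ζf y.1 * (δf x.2 * δf y.2)
            = ζf x.1 * (ζf y.1 * δf x.2) * δf y.2 := by group
          _ = ζf x.1 * (δf x.2 * ζf y.1) * δf y.2 := by rw [hζcen y.1 (δf x.2)]
          _ = (ζf x.1 * δf x.2) * (ζf y.1 * δf y.2) := by group)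
    have hψbij : Function.Bijective ψ := by
      rw [Nat.bijective_iff_injective_and_card]
      constructor
      · rw [injective_iff_map_eq_one]
        rintro ⟨x, d⟩ hxd
        have hαlt : (Multiplicative.toAdd x).val < 2 * p := ZMod.val_lt _
        set α := (Multiplicative.toAdd x).val with hαdef
        have hzα : z ^ α = fH ^ α * u ^ α := hCz.mul_pow α
        cases d with
        | r i =>
          have h' : (fH ^ α * nH ^ i.val) * u ^ α = 1 := by
            have h0 : z ^ α * nH ^ i.val = 1 := hxd
            rw [hzα] at h0
            calc fH ^ α * nH ^ i.val * u ^ α = fH ^ α * (nH ^ i.val * u ^ α) := by group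
              _ = fH ^ α * (u ^ α * nH ^ i.val) := by rw [hupowc α (nH ^ i.val)]
              _ = fH ^ α * u ^ α * nH ^ i.val := by group
              _ = 1 := h0
          have hQmem : fH ^ α * nH ^ i.val ∈ Qs :=
            mul_mem (pow_mem hfQ _) (pow_mem hnQ _)
          have hKmem : u ^ α ∈ K := pow_mem huK α
          have hk1' : u ^ α = 1 := by
            have h2 : u ^ α = (fH ^ α * nH ^ i.val)⁻¹ := (inv_eq_of_mul_eq_one_right h').symm
            exact hQKdisj _ (h2 ▸ Qs.inv_mem hQmem) hKmem
          have hq1 : fH ^ α * nH ^ i.val = 1 := by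
            rw [hk1', mul_one] at h'
            exact h'
          obtain ⟨hf1, hn1⟩ := hdisjH (α : ℤ) (i.val : ℤ)
            (by rw [zpow_natCast, zpow_natCast]; exact hq1)
          rw [zpow_natCast] at hf1 hn1
          have hpα : p ∣ α := by
            have := orderOf_dvd_of_pow_eq_one hf1
            rwa [hordfH] at this
          have h2α : 2 ∣ α := by
            have := orderOf_dvd_of_pow_eq_one hk1'
            rwa [hordu] at this
          have hpiv : p ∣ i.val := by
            have := orderOf_dvd_of_pow_eq_one hn1
            rwa [hordnH] at this
          have hiv0 : i.val = 0 := Nat.eq_zero_of_dvd_of_lt hpiv (ZMod.val_lt i)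
          have hα0 : α = 0 :=
            Nat.eq_zero_of_dvd_of_lt (hcop2p.mul_dvd_of_dvd_of_dvd h2α hpα) hαlt
          have hx1 : x = 1 := by
            rw [← toAdd_eq_zero, ← ZMod.val_eq_zero]
            exact hα0
          have hi0 : i = 0 := (ZMod.val_eq_zero i).mp hiv0
          rw [hx1, hi0]
          rfl
        | sr i =>
          exfalso
          have h' : (fH ^ α * χf (-i)) * (a * u ^ α) = 1 := by
            have h0 : z ^ α * (a * χf i) = 1 := hxd
            rw [hzα] at h0
            calc fH ^ α * χf (-i) * (a * u ^ α)
                = fH ^ α * ((χf (-i) * a) * u ^ α) := by group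
              _ = fH ^ α * ((a * χf (- -i)) * u ^ α) := by rw [hswap (-i)]
              _ = fH ^ α * ((a * χf i) * u ^ α) := by rw [neg_neg]
              _ = fH ^ α * (u ^ α * (a * χf i)) := by rw [hupowc α (a * χf i)]
              _ = fH ^ α * u ^ α * (a * χf i) := by group
              _ = 1 := h0
          have hQmem : fH ^ α * χf (-i) ∈ Qs := mul_mem (pow_mem hfQ _) (hχQ _)
          have hKmem : a * u ^ α ∈ K := mul_mem haK (pow_mem huK α)
          have hk1' : a * u ^ α = 1 := by
            have h2 : a * u ^ α = (fH ^ α * χf (-i))⁻¹ := (inv_eq_of_mul_eq_one_right h').symm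
            exact hQKdisj _ (h2 ▸ Qs.inv_mem hQmem) hKmem
          have ha_eq : a = (u ^ α)⁻¹ := eq_inv_of_mul_eq_one_left hk1'
          have hupow : u ^ α = u ^ (α % 2) := by rw [← hordu, pow_mod_orderOf]
          rcases Nat.mod_two_eq_zero_or_one α with h2 | h2
          · apply ha1
            rw [ha_eq, hupow, h2, pow_zero, inv_one]
          · apply hune_a
            rw [ha_eq, hupow, h2, pow_one, huinv]
      · rw [Nat.card_prod, hcard,
          Nat.card_congr (Multiplicative.ofAdd.symm : Multiplicative (ZMod (2 * p)) ≃ _),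
          Nat.card_zmod, DihedralGroup.nat_card]
        ring
    exact ⟨(MulEquiv.ofBijective ψ hψbij).symm⟩
end
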